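/- arXiv:2504.10377 — 4 statements merged into one kernel-verified Lean document; each statement's English description precedes it below -/
import Mathlib

section
/- Let G be a group, ℓ ≥ 2 and k ∈ {1,…,ℓ}. Take x₁,…,x_{k−1}, y, x_{k+1},…,x_ℓ ∈ G. Then there exist y_{k+1},…,y_{ℓ+1} in the normal closure ⟨y⟩^G of y in G such that, for every x ∈ G, [x₁,…,x_{k−1},xy,x_{k+1},…,x_ℓ] = [x₁,…,x_{k−1},x,x_{k+1}^{y_{k+1}},…,x_ℓ^{y_ℓ}]^{y_{ℓ+1}} · [x₁,…,x_{k−1},y,x_{k+1},…,x_ℓ]. -/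
namespace ArXiv

variable {G : Type*} [Group G]

/-- The commutator `[a,b] = a⁻¹b⁻¹ab`. -/
def comm (a b : G) : G := a⁻¹ * b⁻¹ * a * b

/-- The left-normed commutator `[x₁,…,x_ℓ]` of a list of elements. -/
def leftComm : List G → G
  | [] => 1
  | x :: xs => xs.foldl comm x

/-- `g` is a commutator of length `ℓ`, i.e. `g = [x₁,…,x_ℓ]` for some elements. -/
def IsCommOfLength (ℓ : ℕ) (g : G) : Prop :=
  ∃ x : Fin ℓ → G, g = leftComm (List.ofFn x)

open scoped Classical in
/-- The order of an element, as an extended natural number (`⊤` for infinite order). -/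
noncomputable def extOrder (g : G) : ℕ∞ :=
  if IsOfFinOrder g then (orderOf g : ℕ∞) else ⊤

/-- `𝒟_ℓ` : the set of commutators of length `ℓ` of maximal order in `G`. -/
def maxComms (ℓ : ℕ) (G : Type*) [Group G] : Set G :=
  {d | IsCommOfLength ℓ d ∧ ∀ c : G, IsCommOfLength ℓ c → extOrder c ≤ extOrder d}

/-- A group is residually finite. -/
def ResiduallyFinite (G : Type*) [Group G] : Prop :=
  ∀ g : G, g ≠ 1 → ∃ N : Subgroup G, N.Normal ∧ N.FiniteIndex ∧ g ∉ N

/-- `G` can be generated by `r` elements. -/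
def GeneratedBy (r : ℕ) (G : Type*) [Group G] : Prop :=
  ∃ S : Finset G, S.card ≤ r ∧ Subgroup.closure (S : Set G) = ⊤

/-- `φ_I(y)` : the commutator `[z₁,…,z_ℓ]` where `z_i = y_i` for `i ∈ I` and `z_i = x_i`
otherwise. -/
def phi {ℓ : ℕ} (x : Fin ℓ → G) (I : Finset (Fin ℓ)) (y : Fin ℓ → G) : G :=
  leftComm (List.ofFn fun j => if j ∈ I then y j else x j)

/-- `φ_I(M)^G` : the set of all `G`-conjugates of values `φ_I(y)` with the `y_i` in `M`. -/
def phiConj {ℓ : ℕ} (x : Fin ℓ → G) (I : Finset (Fin ℓ)) (M : Subgroup G) : Set G :=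
  {g | ∃ (y : Fin ℓ → G) (h : G), (∀ j ∈ I, y j ∈ M) ∧ g = h⁻¹ * phi x I y * h}

/-- `G` is `d`-stable with respect to the fixed expression `d = [x₁,…,x_ℓ]`. Note that
`Fin ℓ` index `j` corresponds to the paper's index `j+1 ∈ {1,…,ℓ}`. -/
def DStable {ℓ : ℕ} (x : Fin ℓ → G) (D : Subgroup G) : Prop :=
  ∀ k : ℕ, k ≤ ℓ → ∀ N : Subgroup G, N.Normal →
    N ≤ Subgroup.centralizer {leftComm (List.ofFn x)} →
    (∀ I : Finset (Fin ℓ), I.Nonempty → (∀ j ∈ I, k ≤ (j : ℕ)) →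
      ∀ y : Fin ℓ → G, (∀ j ∈ I, y j ∈ N) → phi x I y = 1) →
    ∀ I : Finset (Fin ℓ), (∀ j ∈ I, k ≤ (j : ℕ)) →
      ∀ y : Fin ℓ → G, (∀ j, y j ∈ N) →
        leftComm (List.ofFn fun j => if (j : ℕ) + 1 = k ∨ j ∈ I then x j * y j else x j) ∈ D

/-- The lexicographic-like order on subsets of `{1,…,ℓ}` : `I < J` iff the smallest index
at which `I` and `J` differ belongs to `J`. -/
def LexLike {ℓ : ℕ} (I J : Finset (Fin ℓ)) : Prop :=
  ∃ t ∈ J, t ∉ I ∧ ∀ s : Fin ℓ, s < t → (s ∈ I ↔ s ∈ J)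

/-- A group is locally residually finite. -/
def LocallyResiduallyFinite (G : Type*) [Group G] : Prop :=
  ∀ H : Subgroup G, H.FG → ResiduallyFinite H

/-- A group is locally nilpotent. -/
def LocallyNilpotent (G : Type*) [Group G] : Prop :=
  ∀ H : Subgroup G, H.FG → Group.IsNilpotent H

def dchain : List G → G → G → List G
  | [], _, _ => []
  | z :: zs, Y, c' => c'⁻¹ :: dchain zs (comm Y z) (c' * Y)
def cend : List G → G → G → G
  | [], _, c' => c'
  | z :: zs, Y, c' => cend zs (comm Y z) (c' * Y)
theorem dchain_length : ∀ (zs : List G) (Y c' : G), (dchain zs Y c').length = zs.length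
  | [], _, _ => rfl
  | z :: zs, Y, c' => by simp [dchain, dchain_length zs]

theorem comm_mem_left {N : Subgroup G} [hN : N.Normal] {Y : G} (hY : Y ∈ N) (z : G) :
    comm Y z ∈ N := by
  have h : comm Y z = Y⁻¹ * (z⁻¹ * Y * z) := by simp [comm, mul_assoc]
  rw [h]
  exact mul_mem (inv_mem hY) (hN.conj_mem' Y hY z)

theorem comm_mem_right {N : Subgroup G} [hN : N.Normal] {y : G} (hy : y ∈ N) (P : G) :
    comm P y ∈ N := by
  have h : comm P y = (P⁻¹ * y⁻¹ * P) * y := by simp [comm, mul_assoc]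
  rw [h]
  exact mul_mem (by simpa using hN.conj_mem' y⁻¹ (inv_mem hy) P) hy

theorem dchain_mem {N : Subgroup G} [hN : N.Normal] :
    ∀ (zs : List G) {Y c' : G}, Y ∈ N → c' ∈ N → ∀ e ∈ dchain zs Y c', e ∈ N
  | [], _, _, _, _ => by simp [dchain]
  | z :: zs, Y, c', hY, hc' => by
    simp only [dchain, List.mem_cons]
    rintro e (rfl | he)
    · exact inv_mem hc'
    · exact dchain_mem zs (comm_mem_left hY z) (mul_mem hc' hY) e he

theorem cend_mem {N : Subgroup G} [hN : N.Normal] :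
    ∀ (zs : List G) {Y c' : G}, Y ∈ N → c' ∈ N → cend zs Y c' ∈ N
  | [], _, _, _, hc' => hc'
  | z :: zs, Y, c', hY, hc' => cend_mem zs (comm_mem_left hY z) (mul_mem hc' hY)

theorem main_ident : ∀ (zs : List G) (Y c' M : G),
    List.foldl comm (c'⁻¹ * M * c' * Y) zs =
      (cend zs Y c')⁻¹ *
        List.foldl comm M (List.zipWith (fun e z => e⁻¹ * z * e) (dchain zs Y c') zs) *
        cend zs Y c' * List.foldl comm Y zs
  | [], Y, c', M => by simp [cend, dchain, mul_assoc]
  | z :: zs, Y, c', M => by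
    have h1 : comm (c'⁻¹ * M * c' * Y) z =
        (c' * Y)⁻¹ * comm M ((c'⁻¹)⁻¹ * z * c'⁻¹) * (c' * Y) * comm Y z := by
      simp only [comm]; group
    simp only [List.foldl_cons, dchain, cend, List.zipWith_cons_cons, h1]
    exact main_ident zs (comm Y z) (c' * Y) (comm M ((c'⁻¹)⁻¹ * z * c'⁻¹))

theorem base_ident (P g y : G) :
    comm P (g * y) = (y * (comm P y)⁻¹)⁻¹ * comm P g * (y * (comm P y)⁻¹) * comm P y := by
  simp only [comm]; group

theorem leftComm_split_nil (z : G) (zs : List G) :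
    leftComm (z :: zs) = List.foldl comm z zs := rfl

theorem leftComm_split_cons (a : G) (as : List G) (z : G) (zs : List G) :
    leftComm ((a :: as) ++ z :: zs) = List.foldl comm (comm (leftComm (a :: as)) z) zs := by
  simp [leftComm, List.foldl_append]

theorem ofFn_split' {α : Type*} {kv m : ℕ} (f : Fin (kv+1+m) → α) :
    List.ofFn f = (List.ofFn fun i : Fin kv => f (Fin.castAdd m i.castSucc)) ++
      f (Fin.castAdd m (Fin.last kv)) :: (List.ofFn fun j : Fin m => f (Fin.natAdd (kv+1) j)) := by
  rw [List.ofFn_add, List.ofFn_succ']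
  simp [List.concat_eq_append]
  rfl



theorem leftComm_split (as : List G) (h : as ≠ []) (z : G) (zs : List G) :
    leftComm (as ++ z :: zs) = List.foldl comm (comm (leftComm as) z) zs := by
  cases as with
  | nil => exact absurd rfl h
  | cons a as' => exact leftComm_split_cons a as' z zs


/-- Lemma 2.2: expansion of a product in the `k`-th entry of a left-normed
commutator. Here `Fin ℓ` index `i` corresponds to paper index `i+1`, so `k : Fin ℓ`
ranges over the paper's `{1,…,ℓ}`; `c i` plays the role of `y_{i+1}` for `i > k`, and
`c'` plays the role of `y_{ℓ+1}`; `g^h = h⁻¹gh`. -/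
theorem stmt5 (G : Type*) [Group G] (ℓ : ℕ) (hℓ : 2 ≤ ℓ) (k : Fin ℓ)
    (x : Fin ℓ → G) (y : G) :
    ∃ (c : Fin ℓ → G) (c' : G),
      (∀ i : Fin ℓ, k < i → c i ∈ Subgroup.normalClosure {y}) ∧
      c' ∈ Subgroup.normalClosure {y} ∧
      ∀ g : G,
        leftComm (List.ofFn fun i => if i = k then g * y else x i) =
          c'⁻¹ * leftComm (List.ofFn fun i =>
              if i = k then g else if k < i then (c i)⁻¹ * x i * c i else x i) * c' *
            leftComm (List.ofFn fun i => if i = k then y else x i) := by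
  obtain ⟨kv, hk⟩ := k
  obtain ⟨m, rfl⟩ : ∃ m, ℓ = kv + 1 + m := ⟨ℓ - (kv + 1), by omega⟩
  set N := Subgroup.normalClosure ({y} : Set G) with hNdef
  have hyN : y ∈ N := Subgroup.subset_normalClosure rfl
  set as : List G := List.ofFn (fun i : Fin kv => x (Fin.castAdd m i.castSucc)) with hasdef
  set zsl : List G := List.ofFn (fun j : Fin m => x (Fin.natAdd (kv+1) j)) with hzsldef
  set P : G := leftComm as with hPdef
  set Y0 : G := if kv = 0 then y else comm P y with hY0def
  set c0 : G := if kv = 0 then 1 else y * (comm P y)⁻¹ with hc0def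
  have hY0N : Y0 ∈ N := by
    rcases eq_or_ne kv 0 with h | h
    · simp only [hY0def, h, if_pos rfl]; exact hyN
    · simp only [hY0def, if_neg h]; exact comm_mem_right hyN P
  have hc0N : c0 ∈ N := by
    rcases eq_or_ne kv 0 with h | h
    · simp only [hc0def, h, if_pos rfl]; exact one_mem N
    · simp only [hc0def, if_neg h]
      exact mul_mem hyN (inv_mem (comm_mem_right hyN P))
  set d : List G := dchain zsl Y0 c0 with hddef
  have hdl : d.length = m := by rw [hddef, dchain_length]; simp [hzsldef]
  have hdN : ∀ e ∈ d, e ∈ N := dchain_mem zsl hY0N hc0N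
  set cf : Fin (kv+1+m) → G := fun i => d.getD (i.val - (kv+1)) 1 with hcfdef
  have hsplitL : ∀ (w : G) (t : List G),
      leftComm (as ++ w :: t) = List.foldl comm (if kv = 0 then w else comm P w) t := by
    intro w t
    rcases eq_or_ne kv 0 with h | h
    · have hnil : as = [] := by subst h; simp [hasdef]
      rw [hnil, if_pos h]
      exact leftComm_split_nil w t
    · have hne : as ≠ [] := by
        rw [hasdef]
        simp [List.ofFn_eq_nil_iff, h]
      rw [if_neg h]
      exact leftComm_split as hne w t
  have hbase : ∀ h : G,
      (if kv = 0 then h * y else comm P (h * y)) =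
        c0⁻¹ * (if kv = 0 then h else comm P h) * c0 * Y0 := by
    intro h
    rcases eq_or_ne kv 0 with h0 | h0
    · simp only [if_pos h0, hc0def, hY0def]
      group
    · simp only [if_neg h0, hc0def, hY0def]
      exact base_ident P h y
  refine ⟨cf, cend zsl Y0 c0, ?_, cend_mem zsl hY0N hc0N, ?_⟩
  · intro i _
    by_cases h : i.val - (kv+1) < d.length
    · rw [hcfdef]
      simp only
      rw [List.getD_eq_getElem _ _ h]
      exact hdN _ (List.getElem_mem h)
    · rw [hcfdef]
      simp only
      rw [List.getD_eq_default _ _ (le_of_not_gt h)]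
      exact one_mem N
  · intro g
    have ezip : List.ofFn (fun j : Fin m =>
        (cf (Fin.natAdd (kv+1) j))⁻¹ * x (Fin.natAdd (kv+1) j) * cf (Fin.natAdd (kv+1) j)) =
        List.zipWith (fun e z => e⁻¹ * z * e) d zsl := by
      apply List.ext_getElem
      · simp [hzsldef, hdl]
      · intro n h1 h2
        have hn : n < m := by simpa using h1
        have hnd : n < d.length := by omega
        simp only [List.getElem_ofFn, List.getElem_zipWith, hzsldef]
        have hcf : cf (Fin.natAdd (kv+1) ⟨n, hn⟩) = d[n] := by
          rw [hcfdef]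
          simp only [Fin.natAdd_mk, Nat.add_sub_cancel_left]
          have : kv + 1 + n - (kv + 1) = n := by omega
          exact List.getD_eq_getElem d 1 hnd
        rw [hcf]
    have e1 : (List.ofFn fun i : Fin (kv+1+m) =>
        if i = (⟨kv, hk⟩ : Fin (kv+1+m)) then g * y else x i) = as ++ (g * y) :: zsl := by
      rw [ofFn_split']
      congr 1
      · exact congrArg List.ofFn (funext fun i => by
          have hi := i.isLt
          rw [if_neg (by simp only [Fin.ext_iff, Fin.coe_castAdd, Fin.coe_castSucc]; omega)])
      congr 1
      · rw [if_pos (by simp [Fin.ext_iff])]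
      · exact congrArg List.ofFn (funext fun j => by
          rw [if_neg (by simp only [Fin.ext_iff, Fin.coe_natAdd]; omega)])
    have e3 : (List.ofFn fun i : Fin (kv+1+m) =>
        if i = (⟨kv, hk⟩ : Fin (kv+1+m)) then y else x i) = as ++ y :: zsl := by
      rw [ofFn_split']
      congr 1
      · exact congrArg List.ofFn (funext fun i => by
          have hi := i.isLt
          rw [if_neg (by simp only [Fin.ext_iff, Fin.coe_castAdd, Fin.coe_castSucc]; omega)])
      congr 1
      · rw [if_pos (by simp [Fin.ext_iff])]
      · exact congrArg List.ofFn (funext fun j => by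
          rw [if_neg (by simp only [Fin.ext_iff, Fin.coe_natAdd]; omega)])
    have e2 : (List.ofFn fun i : Fin (kv+1+m) =>
        if i = (⟨kv, hk⟩ : Fin (kv+1+m)) then g
        else if (⟨kv, hk⟩ : Fin (kv+1+m)) < i then (cf i)⁻¹ * x i * cf i else x i)
        = as ++ g :: List.zipWith (fun e z => e⁻¹ * z * e) d zsl := by
      rw [ofFn_split']
      congr 1
      · exact congrArg List.ofFn (funext fun i => by
          have hi := i.isLt
          rw [if_neg (by simp only [Fin.ext_iff, Fin.coe_castAdd, Fin.coe_castSucc]; omega),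
            if_neg (by simp only [Fin.lt_def, Fin.coe_castAdd, Fin.coe_castSucc]; omega)])
      congr 1
      · rw [if_pos (by simp [Fin.ext_iff])]
      · rw [← ezip]
        exact congrArg List.ofFn (funext fun j => by
          rw [if_neg (by simp only [Fin.ext_iff, Fin.coe_natAdd]; omega),
            if_pos (by simp only [Fin.lt_def, Fin.coe_natAdd]; omega)])
    rw [e1, e2, e3, hsplitL (g * y) zsl,
      hsplitL g (List.zipWith (fun e z => e⁻¹ * z * e) d zsl), hsplitL y zsl, hbase g]
    exact main_ident zsl Y0 c0 (if kv = 0 then g else comm P g)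

end ArXiv
end

section
/- Let G be a group, ℓ ≥ 2, and x₁,…,x_ℓ ∈ G; write d = [x₁,…,x_ℓ]. Suppose there exist k ∈ {0,1,…,ℓ} and a normal subgroup N of G such that N ≤ C_G(d) and φ_I(N) = 1 for every non-empty subset I ⊆ {k+1,…,ℓ} (with respect to the fixed elements x₁,…,x_ℓ). Then [x₁,…,x_k, x_{k+1}y_{k+1},…,x_ℓ y_ℓ] = d for every y_{k+1},…,y_ℓ ∈ N. -/
namespace ArXiv

variable {G : Type*} [Group G]

section Stmt9Aux

variable {N : Subgroup G}

private lemma comm_one_left (b : G) : comm (1:G) b = 1 := by simp [comm]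

private lemma conj_mem' (hN : N.Normal) {g : G} (hg : g ∈ N) (e : G) : e⁻¹ * g * e ∈ N := by
  simpa using hN.conj_mem g hg e⁻¹

private lemma comm_mem_right_s9 (hN : N.Normal) (g : G) {v : G} (hv : v ∈ N) : comm g v ∈ N := by
  have h1 : g⁻¹ * v⁻¹ * g ∈ N := by
    simpa [mul_assoc] using conj_mem' hN (inv_mem hv) g
  simpa [comm, mul_assoc] using mul_mem h1 hv

private lemma comm_mem_left_s9 (hN : N.Normal) {g : G} (hg : g ∈ N) (v : G) : comm g v ∈ N := by
  have h1 : v⁻¹ * g * v ∈ N := conj_mem' hN hg v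
  simpa [comm, mul_assoc] using mul_mem (inv_mem hg) h1

/-- `kil N ts g` : `g` is killed by every tail whose entries dress the template `ts` by `N`. -/
private def kil (N : Subgroup G) : List G → G → Prop
  | [], g => g = 1
  | t :: ts, g => ∀ n ∈ N, kil N ts (comm g (t * n))

private lemma kil_one (N : Subgroup G) : ∀ ts : List G, kil N ts (1 : G) := by
  intro ts
  induction ts with
  | nil => rfl
  | cons t ts ih =>
    intro n hn
    rw [comm_one_left]
    exact ih

private lemma kil_conj (hN : N.Normal) : ∀ (ts : List G) (g : G), kil N ts g →
    ∀ h ∈ N, kil N ts (h * g * h⁻¹) := by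
  intro ts
  induction ts with
  | nil =>
    intro g hg h _
    have hg' : g = 1 := hg
    show h * g * h⁻¹ = 1
    rw [hg']; group
  | cons t ts ih =>
    intro g hg h hh n hn
    have key : comm (h*g*h⁻¹) (t*n) = h * comm g (t * (t⁻¹*h⁻¹*t*n*h)) * h⁻¹ := by
      simp only [comm]; group
    rw [key]
    have hm : (t⁻¹*h⁻¹*t*n*h) ∈ N := by
      have h1 : t⁻¹*h⁻¹*t ∈ N := conj_mem' hN (inv_mem hh) t
      exact mul_mem (mul_mem h1 hn) hh
    exact ih _ (hg _ hm) h hh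

private lemma kil_mul (hN : N.Normal) : ∀ (ts : List G) (g₁ g₂ : G), kil N ts g₁ →
    kil N ts g₂ → g₂ ∈ N → kil N ts (g₁ * g₂) := by
  intro ts
  induction ts with
  | nil =>
    intro g₁ g₂ h1 h2 _
    have h1' : g₁ = 1 := h1
    have h2' : g₂ = 1 := h2
    show g₁ * g₂ = 1
    rw [h1', h2', one_mul]
  | cons t ts ih =>
    intro g₁ g₂ h1 h2 hg₂ n hn
    have key : comm (g₁*g₂) (t*n) = (g₂⁻¹ * comm g₁ (t*n) * g₂) * comm g₂ (t*n) := by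
      simp only [comm]; group
    rw [key]
    have c1 : kil N ts (g₂⁻¹ * comm g₁ (t*n) * g₂) := by
      simpa using kil_conj hN ts _ (h1 n hn) g₂⁻¹ (inv_mem hg₂)
    exact ih _ _ c1 (h2 n hn) (comm_mem_left_s9 hN hg₂ _)

private lemma kil_inv (hN : N.Normal) : ∀ (ts : List G) (g : G), kil N ts g → g ∈ N →
    kil N ts g⁻¹ := by
  intro ts
  induction ts with
  | nil =>
    intro g h1 _
    have h1' : g = 1 := h1
    show g⁻¹ = 1
    rw [h1']; group
  | cons t ts ih =>
    intro g h1 hg n hn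
    have key : comm g⁻¹ (t*n) = g * (comm g (t*n))⁻¹ * g⁻¹ := by simp only [comm]; group
    rw [key]
    exact kil_conj hN ts _ (ih _ (h1 n hn) (comm_mem_left_s9 hN hg _)) g hg

/-- conjugation of a killer by the track value `D` stays a killer, because `[D,g]` is
itself a killer (supplied as a hypothesis, ultimately coming from `hphi`).  This is the
key closure property. -/
private lemma kil_conjD (hN : N.Normal) (ts : List G) (D g : G) (hg : g ∈ N)
    (h1 : kil N ts g) (h2 : kil N ts (comm D g)) : kil N ts (D⁻¹ * g * D) := by
  have key : D⁻¹ * g * D = g * (comm D g)⁻¹ := by simp only [comm]; group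
  rw [key]
  exact kil_mul hN ts _ _ h1 (kil_inv hN ts _ h2 (comm_mem_right_s9 hN D hg))
    (inv_mem (comm_mem_right_s9 hN D hg))

/-- undressed killing: tails whose entries are either the template entry or in `N`. -/
private def und (N : Subgroup G) : List G → G → Prop
  | [], g => g = 1
  | t :: ts, g => und N ts (comm g t) ∧ ∀ n ∈ N, und N ts (comm g n)

private lemma und_kil (hN : N.Normal) : ∀ (ts : List G) (g : G), g ∈ N → und N ts g →
    kil N ts g := by
  intro ts
  induction ts with
  | nil => intro g _ h; exact h
  | cons t ts ih =>
    intro g hg h n hn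
    have key : comm g (t*n) = comm g n * (n⁻¹ * comm g t * n) := by simp only [comm]; group
    rw [key]
    have k1 : kil N ts (comm g n) := ih _ (comm_mem_right_s9 hN g hn) (h.2 n hn)
    have k2 : kil N ts (n⁻¹ * comm g t * n) := by
      simpa using kil_conj hN ts _ (ih _ (comm_mem_left_s9 hN hg t) h.1) n⁻¹ (inv_mem hn)
    exact kil_mul hN ts _ _ k1 k2 (conj_mem' hN (comm_mem_left_s9 hN hg t) n)

/-- mixed tails: each entry equals the template entry or lies in `N`. -/
private def mixOk (N : Subgroup G) : List G → List G → Prop :=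
  List.Forall₂ (fun t w => w = t ∨ w ∈ N)

private lemma mix_und (N : Subgroup G) : ∀ (ts : List G) (g : G),
    (∀ ws, mixOk N ts ws → List.foldl comm g ws = 1) → und N ts g := by
  intro ts
  induction ts with
  | nil => intro g h; exact h [] List.Forall₂.nil
  | cons t ts ih =>
    intro g h
    constructor
    · exact ih _ (fun ws hws => h (t :: ws) (List.Forall₂.cons (Or.inl rfl) hws))
    · intro n hn
      exact ih _ (fun ws hws => h (n :: ws) (List.Forall₂.cons (Or.inr hn) hws))

private lemma leftComm_append (l₁ l₂ : List G) (h : l₁ ≠ []) :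
    leftComm (l₁ ++ l₂) = List.foldl comm (leftComm l₁) l₂ := by
  cases l₁ with
  | nil => exact absurd rfl h
  | cons a l => simp [leftComm, List.foldl_append]

private lemma leftComm_concat (l : List G) (h : l ≠ []) (t : G) :
    leftComm (l ++ [t]) = comm (leftComm l) t := by
  rw [leftComm_append _ _ h]; rfl

private lemma forall₂_getElem {α β : Type*} {R : α → β → Prop} :
    ∀ {l₁ : List α} {l₂ : List β}, List.Forall₂ R l₁ l₂ →
    ∀ i (h₁ : i < l₁.length) (h₂ : i < l₂.length), R l₁[i] l₂[i] := by
  intro l₁ l₂ hf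
  induction hf with
  | nil => intro i h₁ _; simp at h₁
  | cons h hf ih =>
    intro i h₁ h₂
    cases i with
    | zero => simpa using h
    | succ i => simpa using ih i (by simpa using h₁) (by simpa using h₂)

private lemma forall₂_of_getElem {α β : Type*} {R : α → β → Prop} :
    ∀ {l₁ : List α} {l₂ : List β}, l₁.length = l₂.length →
    (∀ i (h₁ : i < l₁.length) (h₂ : i < l₂.length), R l₁[i] l₂[i]) →
    List.Forall₂ R l₁ l₂ := by
  intro l₁
  induction l₁ with
  | nil =>
    intro l₂ h _
    cases l₂ with
    | nil => exact .nil
    | cons b m => simp at h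
  | cons a l ih =>
    intro l₂ h hR
    cases l₂ with
    | nil => simp at h
    | cons b m =>
      refine .cons (hR 0 (by simp) (by simp)) (ih (by simpa using h) ?_)
      intro i h₁ h₂
      exact hR (i+1) (by simpa using h₁) (by simpa using h₂)

/-- the list form of the `hphi` hypothesis. -/
private def Hphi (N : Subgroup G) (k : ℕ) (xl : List G) : Prop :=
  ∀ vs : List G, vs.length = xl.length →
    (∃ σ₀, ∃ h : σ₀ < vs.length, k ≤ σ₀ ∧ vs[σ₀] ∈ N) →
    (∀ σ (h1 : σ < vs.length) (h2 : σ < xl.length), vs[σ] = xl[σ] ∨ (k ≤ σ ∧ vs[σ] ∈ N)) →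
    leftComm vs = 1

private lemma hphi_mixed {k : ℕ} {xl : List G} (hphi' : Hphi N k xl) (pre : List G)
    {ν : G} (hν : ν ∈ N) (t : G) (ts : List G) (hsplit : xl = pre ++ t :: ts)
    (hkpre : k ≤ pre.length) :
    ∀ ws, mixOk N ts ws → leftComm (pre ++ ν :: ws) = 1 := by
  subst hsplit
  intro ws hws
  have hwts : ts.length = ws.length := hws.length_eq
  have hlen : (pre ++ ν :: ws).length = (pre ++ t :: ts).length := by
    simp [hwts]
  apply hphi' _ hlen
  · refine ⟨pre.length, by simp, hkpre, ?_⟩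
    rw [List.getElem_append_right (le_refl pre.length)]
    simpa using hν
  · intro σ h1 h2
    rcases lt_trichotomy σ pre.length with hlt | heq | hgt
    · left
      rw [List.getElem_append_left hlt, List.getElem_append_left hlt]
    · right
      refine ⟨by omega, ?_⟩
      subst heq
      rw [List.getElem_append_right (le_refl pre.length)]
      simpa using hν
    · have hσ : pre.length ≤ σ := le_of_lt hgt
      have h1' : σ < pre.length + (ws.length + 1) := by
        simpa [List.length_append, List.length_cons] using h1
      obtain ⟨j, hj⟩ : ∃ j, σ - pre.length = j + 1 := ⟨σ - pre.length - 1, by omega⟩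
      have hi₁ : j < ws.length := by omega
      have hi₂ : j < ts.length := by omega
      have e1 : (pre ++ ν :: ws)[σ] = ws[j]'hi₁ := by
        rw [List.getElem_append_right hσ]
        simp only [hj, List.getElem_cons_succ]
      have e2 : (pre ++ t :: ts)[σ]'h2 = ts[j]'hi₂ := by
        rw [List.getElem_append_right hσ]
        simp only [hj, List.getElem_cons_succ]
      rcases forall₂_getElem hws _ hi₂ hi₁ with h | h
      · left; rw [e1, e2, h]
      · right; exact ⟨by omega, by rw [e1]; exact h⟩

private lemma hk_lemma (hN : N.Normal) {k : ℕ} {xl : List G} (hphi' : Hphi N k xl) :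
    ∀ (pre : List G) (t : G) (ts : List G), xl = pre ++ t :: ts → k ≤ pre.length →
    ∀ ν ∈ N, kil N ts (comm (leftComm pre) ν) := by
  intro pre t ts hsplit hkpre ν hν
  rcases eq_or_ne pre [] with rfl | hne
  · have h1 : comm (leftComm ([] : List G)) ν = 1 := comm_one_left ν
    rw [h1]; exact kil_one N ts
  · apply und_kil hN _ _ (comm_mem_right_s9 hN _ hν)
    apply mix_und
    intro ws hws
    have e1 : List.foldl comm (comm (leftComm pre) ν) ws = leftComm (pre ++ ν :: ws) := by
      rw [leftComm_append _ _ hne]; rfl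
    rw [e1]
    exact hphi_mixed hphi' pre hν t ts hsplit hkpre ws hws

private lemma hk0 (hN : N.Normal) {xl : List G} (hphi' : Hphi N 0 xl) (t : G) (ts : List G)
    (hsplit : xl = t :: ts) : ∀ ν ∈ N, kil N ts ν := by
  intro ν hν
  apply und_kil hN _ _ hν
  apply mix_und
  intro ws hws
  have e1 : List.foldl comm ν ws = leftComm (([] : List G) ++ ν :: ws) := rfl
  rw [e1]
  exact hphi_mixed hphi' [] hν t ts (by simpa using hsplit) (by simp) ws hws

private lemma main_lemma (hN : N.Normal) {k : ℕ} {xl : List G} (hphi' : Hphi N k xl)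
    (hd : ∀ n ∈ N, leftComm xl * n = n * leftComm xl) :
    ∀ (suf pre : List G), xl = pre ++ suf → pre ≠ [] → k ≤ pre.length →
    ∀ κ h R : G, κ ∈ N → h ∈ N → R ∈ N → kil N suf κ → kil N suf R →
    ∀ vs, List.Forall₂ (fun t v => ∃ n ∈ N, v = t * n) suf vs →
    List.foldl comm (κ * (h⁻¹ * leftComm pre * h) * R) vs = leftComm xl := by
  intro suf
  induction suf with
  | nil =>
    intro pre hsplit _ _ κ h R _ hhN _ hκ hR vs hvs
    cases hvs
    have hκ1 : κ = 1 := hκ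
    have hR1 : R = 1 := hR
    have hpre : pre = xl := by simpa using hsplit.symm
    subst hpre
    rw [List.foldl_nil, hκ1, hR1, one_mul, mul_one, mul_assoc, hd h hhN,
      ← mul_assoc, inv_mul_cancel, one_mul]
  | cons t ts ih =>
    intro pre hsplit hne hkpre κ h R hκN hhN hRN hκ hR vs hvs
    cases hvs with
    | cons hv hvs' =>
      rename_i v vs'
      obtain ⟨n, hn, rfl⟩ := hv
      rw [List.foldl_cons]
      have hstep : comm (κ * (h⁻¹ * leftComm pre * h) * R) (t*n) =
          (((h⁻¹ * leftComm pre * h * R)⁻¹ * comm κ (t*n) * (h⁻¹ * leftComm pre * h * R))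
            * ((h*R)⁻¹ * comm (leftComm pre) (t⁻¹*h*t*n*h⁻¹) * (h*R)))
          * (((t⁻¹*h*t*n*h⁻¹)*h*R)⁻¹ * comm (leftComm pre) t * ((t⁻¹*h*t*n*h⁻¹)*h*R))
          * comm R (t*n) := by
        simp only [comm]; group
      rw [hstep]
      set D := leftComm pre with hD
      set nt := t⁻¹*h*t*n*h⁻¹ with hnt
      have hntN : nt ∈ N := by
        have h1 : t⁻¹*h*t ∈ N := conj_mem' hN hhN t
        exact mul_mem (mul_mem h1 hn) (inv_mem hhN)
      have a0N : comm κ (t*n) ∈ N := comm_mem_left_s9 hN hκN _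
      have c0N : comm D nt ∈ N := comm_mem_right_s9 hN D hntN
      have p1N : (h⁻¹*D*h*R)⁻¹ * comm κ (t*n) * (h⁻¹*D*h*R) ∈ N :=
        conj_mem' hN a0N _
      have p2N : (h*R)⁻¹ * comm D nt * (h*R) ∈ N := conj_mem' hN c0N _
      have hκ₁N : _ ∈ N := mul_mem p1N p2N
      have hh₁N : nt*h*R ∈ N := mul_mem (mul_mem hntN hhN) hRN
      have hR₁N : comm R (t*n) ∈ N := comm_mem_left_s9 hN hRN _
      have hkD : ∀ ν ∈ N, kil N ts (comm D ν) :=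
        hk_lemma hN hphi' pre t ts hsplit hkpre
      have a0kil : kil N ts (comm κ (t*n)) := hκ n hn
      have e1 : (h⁻¹*D*h*R)⁻¹ * comm κ (t*n) * (h⁻¹*D*h*R)
          = R⁻¹ * (h⁻¹ * (D⁻¹ * (h * comm κ (t*n) * h⁻¹) * D) * h) * R := by group
      have b1kil : kil N ts (h * comm κ (t*n) * h⁻¹) := kil_conj hN ts _ a0kil h hhN
      have b1N : h * comm κ (t*n) * h⁻¹ ∈ N := by
        simpa using conj_mem' hN a0N h⁻¹
      have b2kil : kil N ts (D⁻¹ * (h * comm κ (t*n) * h⁻¹) * D) :=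
        kil_conjD hN ts D _ b1N b1kil (hkD _ b1N)
      have b3kil : kil N ts (h⁻¹ * (D⁻¹ * (h * comm κ (t*n) * h⁻¹) * D) * h) := by
        simpa using kil_conj hN ts _ b2kil h⁻¹ (inv_mem hhN)
      have b4kil : kil N ts
          (R⁻¹ * (h⁻¹ * (D⁻¹ * (h * comm κ (t*n) * h⁻¹) * D) * h) * R) := by
        simpa using kil_conj hN ts _ b3kil R⁻¹ (inv_mem hRN)
      have p1kil : kil N ts ((h⁻¹*D*h*R)⁻¹ * comm κ (t*n) * (h⁻¹*D*h*R)) := by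
        rw [e1]; exact b4kil
      have e2 : (h*R)⁻¹ * comm D nt * (h*R) = R⁻¹ * (h⁻¹ * comm D nt * h) * R := by group
      have c1kil : kil N ts (h⁻¹ * comm D nt * h) := by
        simpa using kil_conj hN ts _ (hkD nt hntN) h⁻¹ (inv_mem hhN)
      have c2kil : kil N ts (R⁻¹ * (h⁻¹ * comm D nt * h) * R) := by
        simpa using kil_conj hN ts _ c1kil R⁻¹ (inv_mem hRN)
      have p2kil : kil N ts ((h*R)⁻¹ * comm D nt * (h*R)) := by
        rw [e2]; exact c2kil
      have hκ₁kil : kil N ts (((h⁻¹*D*h*R)⁻¹ * comm κ (t*n) * (h⁻¹*D*h*R))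
          * ((h*R)⁻¹ * comm D nt * (h*R))) :=
        kil_mul hN ts _ _ p1kil p2kil p2N
      have hR₁kil : kil N ts (comm R (t*n)) := hR n hn
      have hsplit' : xl = (pre ++ [t]) ++ ts := by rw [hsplit]; simp
      have hne' : pre ++ [t] ≠ [] := by simp
      have hkpre' : k ≤ (pre ++ [t]).length := by
        simp only [List.length_append, List.length_cons, List.length_nil]
        omega
      have hPC : leftComm (pre ++ [t]) = comm D t := leftComm_concat pre hne t
      have hrec := ih (pre ++ [t]) hsplit' hne' hkpre' _ (nt*h*R) _ hκ₁N hh₁N hR₁N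
        hκ₁kil hR₁kil vs' hvs'
      rw [hPC] at hrec
      exact hrec

end Stmt9Aux

/-- Lemma 4.1: removing entries from `N`. `Fin ℓ` index `j` corresponds to
paper index `j+1`, so the paper's set `{k+1,…,ℓ}` is `{j : Fin ℓ | k ≤ j}`. -/
theorem stmt9 (G : Type*) [Group G] (ℓ : ℕ) (hℓ : 2 ≤ ℓ) (x : Fin ℓ → G)
    (k : ℕ) (hk : k ≤ ℓ) (N : Subgroup G) (hN : N.Normal)
    (hle : N ≤ Subgroup.centralizer {leftComm (List.ofFn x)})
    (hphi : ∀ I : Finset (Fin ℓ), I.Nonempty → (∀ j ∈ I, k ≤ (j : ℕ)) →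
      ∀ y : Fin ℓ → G, (∀ j ∈ I, y j ∈ N) → phi x I y = 1) :
    ∀ y : Fin ℓ → G, (∀ j, y j ∈ N) →
      leftComm (List.ofFn fun j => if k ≤ (j : ℕ) then x j * y j else x j) =
        leftComm (List.ofFn x) := by
  classical
  intro y hy
  have hxlen : (List.ofFn x).length = ℓ := List.length_ofFn
  -- list form of the hypothesis `hphi`
  have hphi' : Hphi N k (List.ofFn x) := by
    intro vs hlen hex hpat
    obtain ⟨σ₀, hσ₀lt, hkσ₀, hσ₀N⟩ := hex
    have hvl : vs.length = ℓ := by rw [hlen, hxlen]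
    set yf : Fin ℓ → G := fun j => vs.getD (j : ℕ) 1 with hyf
    set I : Finset (Fin ℓ) := Finset.univ.filter (fun j => k ≤ (j:ℕ) ∧ yf j ∈ N) with hI
    have hmem : ∀ j : Fin ℓ, j ∈ I ↔ (k ≤ (j:ℕ) ∧ yf j ∈ N) := by
      intro j; simp [hI]
    have hyfe : ∀ (i : ℕ) (h : i < ℓ), yf ⟨i, h⟩ = vs[i]'(by omega) := by
      intro i h
      simp only [hyf]
      exact List.getD_eq_getElem vs 1 (by omega)
    have hne : I.Nonempty := by
      refine ⟨⟨σ₀, by omega⟩, ?_⟩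
      rw [hmem]
      refine ⟨hkσ₀, ?_⟩
      rw [hyfe σ₀ (by omega)]
      exact hσ₀N
    have h2 : ∀ j ∈ I, k ≤ (j:ℕ) := fun j hj => ((hmem j).1 hj).1
    have h3 : ∀ j ∈ I, yf j ∈ N := fun j hj => ((hmem j).1 hj).2
    have hval := hphi I hne h2 yf h3
    rw [phi] at hval
    have heq : List.ofFn (fun j => if j ∈ I then yf j else x j) = vs := by
      apply List.ext_getElem
      · simp [hvl]
      · intro i h1 h2'
        rw [List.getElem_ofFn]
        have hiℓ : i < ℓ := by simpa using h1
        by_cases hi : (⟨i, hiℓ⟩ : Fin ℓ) ∈ I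
        · rw [if_pos hi, hyfe i hiℓ]
        · rw [if_neg hi]
          rcases hpat i h2' (by omega) with hc | hc
          · rw [hc, List.getElem_ofFn]
          · exact absurd ((hmem _).2 ⟨hc.1, by rw [hyfe i hiℓ]; exact hc.2⟩) hi
    rw [← heq]
    exact hval
  -- the centralizer hypothesis, in commuting form
  have hd : ∀ n ∈ N, leftComm (List.ofFn x) * n = n * leftComm (List.ofFn x) := by
    intro n hn
    have := hle hn
    rw [Subgroup.mem_centralizer_iff] at this
    exact this _ (Set.mem_singleton _)
  rcases Nat.eq_zero_or_pos k with rfl | hkpos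
  · -- case k = 0 : the very first entry is dressed
    obtain ⟨m, rfl⟩ : ∃ m, ℓ = m + 1 := ⟨ℓ - 1, by omega⟩
    have hzf : (fun j : Fin (m+1) => if 0 ≤ (j:ℕ) then x j * y j else x j)
        = fun j => x j * y j := by
      funext j; rw [if_pos (Nat.zero_le _)]
    rw [hzf]
    have hsplit0 : List.ofFn x = [x 0] ++ List.ofFn (fun i : Fin m => x i.succ) := by
      rw [List.ofFn_succ]; rfl
    have hsplit0' : List.ofFn x = x 0 :: List.ofFn (fun i : Fin m => x i.succ) := by
      rw [List.ofFn_succ]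
    have hkil : kil N (List.ofFn (fun i : Fin m => x i.succ)) (y 0) :=
      hk0 hN hphi' _ _ hsplit0' (y 0) (hy 0)
    have hdress : List.Forall₂ (fun t v => ∃ n ∈ N, v = t * n)
        (List.ofFn (fun i : Fin m => x i.succ))
        (List.ofFn (fun i : Fin m => x i.succ * y i.succ)) := by
      apply forall₂_of_getElem
      · simp
      · intro i h1 h2
        rw [List.getElem_ofFn, List.getElem_ofFn]
        exact ⟨y (Fin.succ ⟨i, by simpa using h1⟩), hy _, rfl⟩
    have hmain := main_lemma hN hphi' hd (List.ofFn (fun i : Fin m => x i.succ)) [x 0]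
      hsplit0 (by simp) (by simp) 1 1 (y 0) (one_mem N) (one_mem N) (hy 0)
      (kil_one N _) hkil _ hdress
    rw [List.ofFn_succ]
    show List.foldl comm (x 0 * y 0) (List.ofFn fun i : Fin m => x i.succ * y i.succ)
        = leftComm (List.ofFn x)
    have hval : (1:G) * (1⁻¹ * leftComm [x 0] * 1) * y 0 = x 0 * y 0 := by
      show (1:G) * (1⁻¹ * x 0 * 1) * y 0 = x 0 * y 0
      group
    rw [← hval]
    exact hmain
  · -- case 1 ≤ k
    have htake : (List.ofFn fun j : Fin ℓ => if k ≤ (j:ℕ) then x j * y j else x j).take k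
        = (List.ofFn x).take k := by
      apply List.ext_getElem
      · simp
      · intro i h1 h2
        have hik : i < k := by
          simp only [List.length_take, List.length_ofFn] at h1
          omega
        rw [List.getElem_take, List.getElem_take, List.getElem_ofFn, List.getElem_ofFn]
        exact if_neg (by simpa using not_le.mpr hik)
    have hTlen : ((List.ofFn x).take k).length = k := by
      rw [List.length_take, hxlen]
      omega
    have hTne : (List.ofFn x).take k ≠ [] := by
      intro hc
      rw [hc] at hTlen
      simp at hTlen
      omega
    have hTne' : (List.ofFn fun j : Fin ℓ => if k ≤ (j:ℕ) then x j * y j else x j).take k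
        ≠ [] := by rw [htake]; exact hTne
    have hdress : List.Forall₂ (fun t v => ∃ n ∈ N, v = t * n)
        ((List.ofFn x).drop k)
        ((List.ofFn fun j : Fin ℓ => if k ≤ (j:ℕ) then x j * y j else x j).drop k) := by
      apply forall₂_of_getElem
      · simp
      · intro i h1 h2
        have hki : k + i < ℓ := by
          simp only [List.length_drop, List.length_ofFn] at h1
          omega
        rw [List.getElem_drop, List.getElem_drop, List.getElem_ofFn, List.getElem_ofFn]
        refine ⟨y ⟨k+i, hki⟩, hy _, ?_⟩
        simp only [Fin.val_mk]
        exact if_pos (Nat.le_add_right k i)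
    have hmain := main_lemma hN hphi' hd ((List.ofFn x).drop k) ((List.ofFn x).take k)
      (List.take_append_drop k _).symm hTne (by rw [hTlen]) 1 1 1 (one_mem N) (one_mem N)
      (one_mem N) (kil_one N _) (kil_one N _) _ hdress
    conv_lhs => rw [← List.take_append_drop k
      (List.ofFn fun j : Fin ℓ => if k ≤ (j:ℕ) then x j * y j else x j)]
    rw [leftComm_append _ _ hTne', htake]
    simpa using hmain

end ArXiv
end

section
/- For all positive integers ℓ, m, n, b, i there are constants C₁ = C₁(m,ℓ,b,i) and C₂ = C₂(m,n,ℓ,b), depending only on the indicated parameters, with the following property. Let G be a group such that the set 𝒟_ℓ of commutators of length ℓ of maximal order in G has exactly m elements, let d = [x₁,…,x_ℓ] ∈ 𝒟_ℓ have order n, and assume G is d-stable (with respect to the fixed expression d = [x₁,…,x_ℓ]). Let I ⊆ {1,…,ℓ} and suppose M is a normal subgroup of G of index i such that: (i) |φ_J(M)^G| < b for every subset J ⊆ {1,…,ℓ} with J < I in the lexicographic-like order; and (ii) for every u ∈ I and every non-empty J ⊆ {u+1,…,ℓ}, φ_{(I∖{u,…,ℓ}) ∪ J}(M) = 1. Then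 there exists a normal subgroup M* of G with [G : M*] ≤ C₁ and |φ_I(M*)^G| ≤ C₂. -/
namespace ArXiv

variable {G : Type*} [Group G]

/-! ### Auxiliary infrastructure for the proof of Statement 13 -/

set_option linter.unusedSectionVars false
set_option linter.unnecessarySimpa false

section Basics

variable {H : Type*} [Group H]

/-- Fold of `comm` along a list, starting from a seed. -/
def fc (l : List G) (g : G) : G := l.foldl comm g

@[simp] lemma fc_nil (g : G) : fc [] g = g := rfl

@[simp] lemma fc_cons (a : G) (l : List G) (g : G) : fc (a :: l) g = fc l (comm g a) := rfl

lemma fc_append (l₁ l₂ : List G) (g : G) : fc (l₁ ++ l₂) g = fc l₂ (fc l₁ g) :=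
  List.foldl_append ..

lemma leftComm_cons (a : G) (l : List G) : leftComm (a :: l) = fc l a := rfl

@[simp] lemma leftComm_nil : leftComm ([] : List G) = 1 := rfl

@[simp] lemma leftComm_singleton (a : G) : leftComm [a] = a := rfl

lemma map_comm (f : G →* H) (a b : G) : f (comm a b) = comm (f a) (f b) := by
  simp [comm, map_mul, map_inv]

lemma map_fc (f : G →* H) (l : List G) (g : G) : f (fc l g) = fc (l.map f) (f g) := by
  induction l generalizing g with
  | nil => rfl
  | cons a t ih => simp only [fc_cons, List.map_cons, ih, map_comm]

lemma map_leftComm (f : G →* H) (l : List G) : f (leftComm l) = leftComm (l.map f) := by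
  cases l with
  | nil => simp [leftComm]
  | cons a t => simp only [leftComm_cons, List.map_cons, map_fc]

/-- `[a, bc] = [a,c] · [a,b]^c`. -/
lemma comm_mul_right (a b c : G) :
    comm a (b * c) = comm a c * (c⁻¹ * comm a b * c) := by
  simp only [comm]; group

/-- `[gp, e] = [g,e]^p · [p,e]`. -/
lemma comm_mul_left (g p e : G) :
    comm (g * p) e = (p⁻¹ * comm g e * p) * comm p e := by
  simp only [comm]; group

/-- Splitting a left-normed commutator at position `k+1`. -/
lemma leftComm_split_s13 (l : List G) (k : ℕ) :
    leftComm l = fc (l.drop (k + 1)) (leftComm (l.take (k + 1))) := by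
  cases l with
  | nil => simp
  | cons a t =>
    simp only [List.take_succ_cons, List.drop_succ_cons, leftComm_cons]
    rw [← fc_append, List.take_append_drop]

end Basics

section Core

variable {H : Type*} [Group H] {ι : Type*} [DecidableEq ι] (NN : Subgroup H) (x : ι → H)

/-- The seed `g` dies under every `NN`-dressed tail along `js`. -/
def Dies (js : List ι) (g : H) : Prop :=
  ∀ ν : ι → H, (∀ j, ν j ∈ NN) → fc (js.map fun j => x j * ν j) g = 1

variable {NN x}

lemma Dies.conj (hNN : NN.Normal) {js : List ι} {g : H} (hg : Dies NN x js g)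
    {c : H} (hc : c ∈ NN) : Dies NN x js (c⁻¹ * g * c) := by
  intro ν hν
  set νh : ι → H := fun j => (x j)⁻¹ * c * x j * ν j * c⁻¹ with hνh
  have hνhm : ∀ j, νh j ∈ NN := by
    intro j
    have h1 : (x j)⁻¹ * c * x j ∈ NN := by
      have := hNN.conj_mem c hc (x j)⁻¹
      simpa using this
    exact mul_mem (mul_mem h1 (hν j)) (inv_mem hc)
  have hlist : (js.map fun j => x j * ν j)
      = (js.map fun j => x j * νh j).map (fun a => c⁻¹ * a * c) := by
    rw [List.map_map]
    refine List.map_congr_left fun j _ => ?_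
    simp only [Function.comp_apply, hνh]
    group
  have hmap := map_fc ((MulAut.conj c⁻¹).toMonoidHom) (js.map fun j => x j * νh j) g
  have happ : ∀ a : H, (MulAut.conj c⁻¹).toMonoidHom a = c⁻¹ * a * c := by
    intro a; simp [MulAut.conj_apply]
  rw [hlist]
  have heq : (js.map fun j => x j * νh j).map (fun a => c⁻¹ * a * c)
      = (js.map fun j => x j * νh j).map ((MulAut.conj c⁻¹).toMonoidHom) := by
    refine List.map_congr_left fun a _ => (happ a).symm
  rw [heq, ← happ g, ← hmap, hg νh hνhm, map_one]

lemma absorb (hNN : NN.Normal) : ∀ js : List ι, js.Nodup → ∀ g p : H, p ∈ NN →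
    Dies NN x js g → ∀ ν : ι → H, (∀ j, ν j ∈ NN) →
    fc (js.map fun j => x j * ν j) (g * p) = fc (js.map fun j => x j * ν j) p := by
  intro js
  induction js with
  | nil =>
    intro _ g p _ hg ν _
    have hg1 : g = 1 := by simpa using hg (fun _ => 1) (fun _ => one_mem _)
    simp [hg1]
  | cons j rest ih =>
    intro hnd g p hp hg ν hν
    have hjr : j ∉ rest := (List.nodup_cons.mp hnd).1
    have hndr : rest.Nodup := (List.nodup_cons.mp hnd).2
    have hrest_upd : ∀ (ν' : ι → H) (a : H),
        (rest.map fun k => x k * (Function.update ν' j a) k) = rest.map fun k => x k * ν' k := by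
      intro ν' a
      refine List.map_congr_left fun k hk => ?_
      have : k ≠ j := fun h => hjr (h ▸ hk)
      rw [Function.update_of_ne this]
    set e := x j * ν j with he
    have hge : Dies NN x rest (comm g e) := by
      intro ν' hν'
      have hmem : ∀ k, (Function.update ν' j (ν j)) k ∈ NN := by
        intro k
        rcases eq_or_ne k j with rfl | hkj
        · simpa using hν k
        · rw [Function.update_of_ne hkj]; exact hν' k
      have := hg (Function.update ν' j (ν j)) hmem
      rw [List.map_cons, fc_cons, Function.update_self, hrest_upd] at this
      exact this
    have hg₁ : Dies NN x rest (p⁻¹ * comm g e * p) := hge.conj hNN hp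
    have hp₁ : comm p e ∈ NN := by
      have h1 : e⁻¹ * p * e ∈ NN := by simpa using hNN.conj_mem p hp e⁻¹
      have := mul_mem (inv_mem hp) h1
      simpa [comm, mul_assoc] using this
    rw [List.map_cons, fc_cons, fc_cons, comm_mul_left]
    exact ih hndr _ _ hp₁ hg₁ ν hν

lemma core (hNN : NN.Normal) : ∀ js : List ι, js.Nodup → ∀ σ : H,
    Dies NN x js σ → ∀ c : ι → H,
    (∀ j ∈ js, c j ∈ NN ∨ ∃ ν ∈ NN, c j = x j * ν) →
    fc (js.map c) σ = 1 := by
  intro js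
  induction js with
  | nil =>
    intro _ σ hσ c _
    simpa using hσ (fun _ => 1) (fun _ => one_mem _)
  | cons j rest ih =>
    intro hnd σ hσ c hc
    have hjr : j ∉ rest := (List.nodup_cons.mp hnd).1
    have hndr : rest.Nodup := (List.nodup_cons.mp hnd).2
    have hrest_upd : ∀ (ν' : ι → H) (a : H),
        (rest.map fun k => x k * (Function.update ν' j a) k) = rest.map fun k => x k * ν' k := by
      intro ν' a
      refine List.map_congr_left fun k hk => ?_
      have : k ≠ j := fun h => hjr (h ▸ hk)
      rw [Function.update_of_ne this]
    have hupdmem : ∀ (ν' : ι → H) (a : H), a ∈ NN → (∀ k, ν' k ∈ NN) →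
        ∀ k, (Function.update ν' j a) k ∈ NN := by
      intro ν' a ha hν' k
      rcases eq_or_ne k j with rfl | hkj
      · simpa using ha
      · rw [Function.update_of_ne hkj]; exact hν' k
    have hdress : ∀ a : H, a ∈ NN → Dies NN x rest (comm σ (x j * a)) := by
      intro a ha ν' hν'
      have := hσ (Function.update ν' j a) (hupdmem ν' a ha hν')
      rw [List.map_cons, fc_cons, Function.update_self, hrest_upd] at this
      exact this
    rcases hc j List.mem_cons_self with hpure | ⟨ν₀, hν₀, hcj⟩
    · set νp := c j with hνp
      set A := comm σ νp with hA
      have hAmem : A ∈ NN := by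
        have h1 : σ⁻¹ * νp⁻¹ * σ ∈ NN := by
          simpa [mul_assoc] using hNN.conj_mem νp⁻¹ (inv_mem hpure) σ⁻¹
        have := mul_mem h1 hpure
        simpa [hA, comm, mul_assoc] using this
      set B := comm σ (x j) with hB
      have hBdies : Dies NN x rest B := by
        have := hdress 1 (one_mem _)
        simpa using this
      have hBν : Dies NN x rest (νp⁻¹ * B * νp) := hBdies.conj hNN hpure
      have hgdies : Dies NN x rest (A * (νp⁻¹ * B * νp) * A⁻¹) := by
        have := hBν.conj hNN (inv_mem hAmem)
        simpa using this
      have hAdies : Dies NN x rest A := by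
        intro ν' hν'
        have h1 := hdress νp hpure ν' hν'
        have hsplit : comm σ (x j * νp) = (A * (νp⁻¹ * B * νp) * A⁻¹) * A := by
          rw [comm_mul_right, hA, hB]; group
        rw [hsplit] at h1
        rw [← absorb hNN rest hndr _ A hAmem hgdies ν' hν']
        exact h1
      have := ih hndr A hAdies c (fun k hk => hc k (List.mem_cons_of_mem j hk))
      rw [List.map_cons, fc_cons, ← hνp, ← hA]
      exact this
    · have hσ' : Dies NN x rest (comm σ (c j)) := by
        rw [hcj]; exact hdress ν₀ hν₀
      have := ih hndr _ hσ' c (fun k hk => hc k (List.mem_cons_of_mem j hk))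
      rw [List.map_cons, fc_cons]
      exact this

/-- Head version : if all dressed values `x₀ν₀` (followed by dressed tails) die, then any
pure head followed by a mixed tail dies. -/
lemma hcore (hNN : NN.Normal) (js : List ι) (hnd : js.Nodup) (x₀ : H)
    (hbase : ∀ ν₀ ∈ NN, ∀ ν : ι → H, (∀ j, ν j ∈ NN) →
      fc (js.map fun j => x j * ν j) (x₀ * ν₀) = 1) :
    ∀ νp ∈ NN, ∀ c : ι → H,
      (∀ j ∈ js, c j ∈ NN ∨ ∃ ν ∈ NN, c j = x j * ν) →
      fc (js.map c) νp = 1 := by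
  intro νp hνp c hc
  have hx₀ : Dies NN x js x₀ := by
    intro ν hν; simpa using hbase 1 (one_mem _) ν hν
  have hνpdies : Dies NN x js νp := by
    intro ν hν
    have h1 := hbase νp hνp ν hν
    rwa [absorb hNN js hnd x₀ νp hνp hx₀ ν hν] at h1
  exact core hNN js hnd νp hνpdies c hc

end Core

section Dietzmann

variable [DecidableEq G]

/-- Pull one occurrence of `s` to the front of a word over a symmetric conjugation-closed set. -/
lemma pull_one (S' : Set G) (hconj : ∀ g : G, ∀ s ∈ S', g⁻¹ * s * g ∈ S') (s : G) :
    ∀ l : List G, (∀ a ∈ l, a ∈ S') → s ∈ l →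
    ∃ l' : List G, (∀ a ∈ l', a ∈ S') ∧ l'.length + 1 = l.length ∧
      l.prod = s * l'.prod ∧ l.count s = l'.count s + 1 := by
  intro l
  induction l with
  | nil => simp
  | cons a t ih =>
    intro hmem hs
    by_cases ha : a = s
    · subst ha
      exact ⟨t, fun b hb => hmem b (List.mem_cons_of_mem a hb), by simp,
        by simp, by simp⟩
    · have hst : s ∈ t := by
        rcases List.mem_cons.mp hs with h | h
        · exact absurd h.symm ha
        · exact h
      obtain ⟨t', ht'm, ht'l, ht'p, ht'c⟩ := ih (fun b hb => hmem b (List.mem_cons_of_mem a hb)) hst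
      refine ⟨(s⁻¹ * a * s) :: t', ?_, ?_, ?_, ?_⟩
      · intro b hb
        rcases List.mem_cons.mp hb with rfl | hb
        · exact hconj s a (hmem a List.mem_cons_self)
        · exact ht'm b hb
      · simpa using ht'l
      · have h1 : (a :: t).prod = a * t.prod := by simp
        rw [h1, ht'p]
        simp [mul_assoc]
      · have hne : s ≠ s⁻¹ * a * s := by
          intro h
          apply ha
          have h2 : a * s = s * s := by
            have := congrArg (fun z => s * z) h
            simpa [mul_assoc] using this.symm
          exact mul_right_cancel h2
        rw [List.count_cons_of_ne ha, List.count_cons_of_ne (Ne.symm hne), ht'c]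

/-- Pull `k` occurrences of `s` to the front. -/
lemma pull_k (S' : Set G) (hconj : ∀ g : G, ∀ s ∈ S', g⁻¹ * s * g ∈ S') (s : G) :
    ∀ (k : ℕ) (l : List G), (∀ a ∈ l, a ∈ S') → k ≤ l.count s →
    ∃ l' : List G, (∀ a ∈ l', a ∈ S') ∧ l'.length + k = l.length ∧ l.prod = s ^ k * l'.prod := by
  intro k
  induction k with
  | zero => intro l hl _; exact ⟨l, hl, by simp, by simp⟩
  | succ k ih =>
    intro l hl hcount
    have hsl : s ∈ l := by
      have : 0 < l.count s := lt_of_lt_of_le (Nat.succ_pos k) hcount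
      exact List.count_pos_iff.mp this
    obtain ⟨l₁, hl₁m, hl₁l, hl₁p, hl₁c⟩ := pull_one S' hconj s l hl hsl
    have hc₁ : k ≤ l₁.count s := by omega
    obtain ⟨l', hl'm, hl'l, hl'p⟩ := ih l₁ hl₁m hc₁
    refine ⟨l', hl'm, by omega, ?_⟩
    rw [hl₁p, hl'p, ← mul_assoc, ← pow_succ']

/-- Any word over a finite symmetric conjugation-closed set of elements of exponent dividing
`n` is equal to a word of length at most `n * |S'|`. -/
lemma reduce_word (S' : Set G) (hfin : S'.Finite)
    (hconj : ∀ g : G, ∀ s ∈ S', g⁻¹ * s * g ∈ S') (n : ℕ) (hn : 0 < n)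
    (hord : ∀ s ∈ S', s ^ n = 1) :
    ∀ l : List G, (∀ a ∈ l, a ∈ S') →
    ∃ l' : List G, (∀ a ∈ l', a ∈ S') ∧ l'.length ≤ n * hfin.toFinset.card ∧
      l'.prod = l.prod := by
  suffices h : ∀ (L : ℕ) (l : List G), l.length ≤ L → (∀ a ∈ l, a ∈ S') →
      ∃ l' : List G, (∀ a ∈ l', a ∈ S') ∧ l'.length ≤ n * hfin.toFinset.card ∧
        l'.prod = l.prod by
    exact fun l hl => h l.length l le_rfl hl
  intro L
  induction L with
  | zero =>
    intro l hlen hl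
    exact ⟨l, hl, by omega, rfl⟩
  | succ L ih =>
    intro l hlen hl
    by_cases hshort : l.length ≤ n * hfin.toFinset.card
    · exact ⟨l, hl, hshort, rfl⟩
    · push_neg at hshort
      have hsub : l.toFinset ⊆ hfin.toFinset := by
        intro a ha
        rw [Set.Finite.mem_toFinset]
        exact hl a (List.mem_toFinset.mp ha)
      have hpig : ∃ s ∈ l, n ≤ l.count s := by
        by_contra hcon
        push_neg at hcon
        have hle : ∀ a ∈ l.toFinset, l.count a ≤ n - 1 := by
          intro a ha
          have := hcon a (List.mem_toFinset.mp ha)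
          omega
        have hsum : l.length = ∑ a ∈ l.toFinset, l.count a := by
          have h := Multiset.toFinset_sum_count_eq (l : Multiset G)
          simpa using h.symm
        have h1 : l.length ≤ (n - 1) * l.toFinset.card := by
          rw [hsum]
          calc ∑ a ∈ l.toFinset, l.count a ≤ ∑ _a ∈ l.toFinset, (n - 1) :=
                Finset.sum_le_sum hle
            _ = l.toFinset.card * (n - 1) := by rw [Finset.sum_const, smul_eq_mul]
            _ = (n - 1) * l.toFinset.card := mul_comm _ _
        have hcard : l.toFinset.card ≤ hfin.toFinset.card := Finset.card_le_card hsub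
        have h2 : l.length ≤ (n - 1) * hfin.toFinset.card :=
          le_trans h1 (Nat.mul_le_mul_left _ hcard)
        have h3 : (n - 1) * hfin.toFinset.card ≤ n * hfin.toFinset.card :=
          Nat.mul_le_mul_right _ (by omega)
        omega
      obtain ⟨s, hsl, hscount⟩ := hpig
      obtain ⟨l', hl'm, hl'l, hl'p⟩ := pull_k S' hconj s n l hl hscount
      have hlt : l'.length ≤ L := by omega
      obtain ⟨l'', h1, h2, h3⟩ := ih l' hlt hl'm
      refine ⟨l'', h1, h2, ?_⟩
      rw [h3, hl'p, hord s (hl s hsl), one_mul]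

/-- Words of bounded length over a finite alphabet (containing 1) form a finite set of
bounded cardinality. -/
lemma bounded_words (T : Finset G) (h1 : (1 : G) ∈ T) (K : ℕ) :
    ∃ W : Set G, W.Finite ∧ W.ncard ≤ T.card ^ K ∧
      ∀ l : List G, (∀ a ∈ l, a ∈ T) → l.length ≤ K → l.prod ∈ W := by
  refine ⟨Set.range (fun f : Fin K → {a // a ∈ T} => (List.ofFn (fun i => ((f i : G)))).prod),
    Set.finite_range _, ?_, ?_⟩
  · calc (Set.range _).ncard = ((fun f : Fin K → {a // a ∈ T} =>
            (List.ofFn (fun i => ((f i : G)))).prod) '' Set.univ).ncard := by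
          rw [Set.image_univ]
      _ ≤ (Set.univ : Set (Fin K → {a // a ∈ T})).ncard := Set.ncard_image_le Set.finite_univ
      _ = Nat.card (Fin K → {a // a ∈ T}) := Set.ncard_univ _
      _ = T.card ^ K := by
          rw [Nat.card_fun]
          congr 1
          · simp [Nat.card_eq_fintype_card]
          · simp [Nat.card_eq_fintype_card]
  · intro l hl hlen
    have hmem : ∀ (i : ℕ) (h : i < l.length), l[i] ∈ T := fun i h => hl _ (List.getElem_mem h)
    classical
    let f : Fin K → {a // a ∈ T} := fun i =>
      if h : (i : ℕ) < l.length then ⟨l[(i : ℕ)], hmem _ h⟩ else ⟨1, h1⟩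
    refine ⟨f, ?_⟩
    have hofn : (List.ofFn fun i => ((f i : G))) = l ++ List.replicate (K - l.length) 1 := by
      apply List.ext_getElem
      · simp [Nat.add_sub_cancel' hlen]
      · intro i hi₁ hi₂
        rw [List.getElem_ofFn]
        by_cases h : i < l.length
        · have hv : ((f ⟨i, by simpa using hi₁⟩ : {a // a ∈ T}) : G) = l[i] := by
            simp only [f]
            rw [dif_pos h]
          rw [hv, List.getElem_append_left h]
        · have hv : ((f ⟨i, by simpa using hi₁⟩ : {a // a ∈ T}) : G) = 1 := by
            simp only [f]
            rw [dif_neg h]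
          rw [hv, List.getElem_append_right (le_of_not_gt h), List.getElem_replicate]
    show (List.ofFn fun i => ((f i : G))).prod = l.prod
    rw [hofn, List.prod_append, List.prod_replicate, one_pow, mul_one]

end Dietzmann

section MaxComms

lemma conj_leftComm (g : G) (l : List G) :
    g⁻¹ * leftComm l * g = leftComm (l.map fun a => g⁻¹ * a * g) := by
  have happ : ∀ a : G, (MulAut.conj g⁻¹).toMonoidHom a = g⁻¹ * a * g := by
    intro a; simp [MulAut.conj_apply]
  have h := map_leftComm (MulAut.conj g⁻¹).toMonoidHom l
  rw [happ] at h
  rw [h]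
  congr 1
  exact List.map_congr_left fun a _ => happ a

lemma orderOf_conj' (g c : G) : orderOf (g⁻¹ * c * g) = orderOf c := by
  have h := orderOf_injective (MulAut.conj g⁻¹).toMonoidHom
    (MulEquiv.injective _) c
  simpa [MulAut.conj_apply, mul_assoc] using h

lemma isOfFinOrder_conj (g c : G) : IsOfFinOrder (g⁻¹ * c * g) ↔ IsOfFinOrder c := by
  rw [← orderOf_pos_iff, ← orderOf_pos_iff, orderOf_conj']

lemma extOrder_conj (g c : G) : extOrder (g⁻¹ * c * g) = extOrder c := by
  unfold extOrder
  by_cases h : IsOfFinOrder c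
  · rw [if_pos h, if_pos ((isOfFinOrder_conj g c).mpr h), orderOf_conj']
  · rw [if_neg h, if_neg (fun hc => h ((isOfFinOrder_conj g c).mp hc))]

lemma isCommOfLength_conj {ℓ : ℕ} {c : G} (h : IsCommOfLength ℓ c) (g : G) :
    IsCommOfLength ℓ (g⁻¹ * c * g) := by
  obtain ⟨z, rfl⟩ := h
  refine ⟨fun i => g⁻¹ * z i * g, ?_⟩
  rw [conj_leftComm, List.map_ofFn]
  rfl

lemma conj_mem_maxComms {ℓ : ℕ} {c : G} (h : c ∈ maxComms ℓ G) (g : G) :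
    g⁻¹ * c * g ∈ maxComms ℓ G := by
  refine ⟨isCommOfLength_conj h.1 g, fun c' hc' => ?_⟩
  rw [extOrder_conj]
  exact h.2 c' hc'

lemma maxComms_orderOf {ℓ n : ℕ} {d : G} (hd : d ∈ maxComms ℓ G)
    (hord : orderOf d = n) (hn : 0 < n) :
    ∀ c ∈ maxComms ℓ G, orderOf c = n := by
  intro c hc
  have hfin : IsOfFinOrder d := by
    rw [← orderOf_pos_iff, hord]; exact hn
  have hed : extOrder d = (n : ℕ∞) := by
    unfold extOrder; rw [if_pos hfin, hord]
  have heq : extOrder c = extOrder d := le_antisymm (hd.2 c hc.1) (hc.2 d hd.1)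
  rw [hed] at heq
  unfold extOrder at heq
  by_cases h : IsOfFinOrder c
  · rw [if_pos h] at heq
    exact_mod_cast heq
  · rw [if_neg h] at heq
    exact absurd heq (by simp)

lemma closure_maxComms_normal {ℓ : ℕ} : (Subgroup.closure (maxComms ℓ G)).Normal := by
  constructor
  intro h hmem g
  have h1 : (MulAut.conj g).toMonoidHom h ∈
      (Subgroup.closure (maxComms ℓ G)).map (MulAut.conj g).toMonoidHom :=
    Subgroup.mem_map_of_mem _ hmem
  rw [MonoidHom.map_closure] at h1
  have h2 : (MulAut.conj g).toMonoidHom '' (maxComms ℓ G) ⊆ maxComms ℓ G := by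
    rintro _ ⟨c, hc, rfl⟩
    have := conj_mem_maxComms hc g⁻¹
    simpa [MulAut.conj_apply, mul_assoc] using this
  have h3 := Subgroup.closure_mono h2 h1
  simpa [MulAut.conj_apply] using h3

end MaxComms

section IndexBounds

/-- If all conjugates of `d` lie in a finite set of cardinality `≤ m`, then the centralizer
of `d` has finite positive index at most `m`. -/
lemma centralizer_index_le {d : G} {S : Set G} (hfin : S.Finite) {m : ℕ}
    (hcard : S.ncard ≤ m) (hconj : ∀ g : G, g⁻¹ * d * g ∈ S) :
    (Subgroup.centralizer {d}).index ≤ m ∧ 0 < (Subgroup.centralizer {d}).index := by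
  set C := Subgroup.centralizer {d} with hC
  have hwd : ∀ a b : G, (QuotientGroup.leftRel C) a b → a * d * a⁻¹ = b * d * b⁻¹ := by
    intro a b hab
    rw [QuotientGroup.leftRel_apply] at hab
    have hcomm : d * (a⁻¹ * b) = (a⁻¹ * b) * d := Subgroup.mem_centralizer_iff.mp hab d rfl
    have h2 : b * d * b⁻¹ = a * ((a⁻¹ * b) * d * (a⁻¹ * b)⁻¹) * a⁻¹ := by group
    rw [h2, ← hcomm]
    group
  set f : G ⧸ C → G := Quotient.lift (fun g => g * d * g⁻¹) hwd with hf
  have hfmk : ∀ g : G, f (QuotientGroup.mk g) = g * d * g⁻¹ := fun g => rfl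
  have hrange : ∀ q : G ⧸ C, f q ∈ S := by
    intro q
    induction q using QuotientGroup.induction_on with
    | H g =>
      rw [hfmk]
      have := hconj g⁻¹
      simpa using this
  have hinj : Function.Injective f := by
    intro q₁ q₂ hq
    induction q₁ using QuotientGroup.induction_on with
    | H g₁ =>
    induction q₂ using QuotientGroup.induction_on with
    | H g₂ =>
      rw [hfmk, hfmk] at hq
      show (QuotientGroup.mk g₁ : G ⧸ C) = QuotientGroup.mk g₂
      rw [QuotientGroup.eq]
      rw [Subgroup.mem_centralizer_iff]
      intro y hy
      rw [Set.mem_singleton_iff] at hy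
      rw [hy]
      have h3 : d * (g₁⁻¹ * g₂) = g₁⁻¹ * (g₁ * d * g₁⁻¹) * g₂ := by group
      rw [h3, hq]
      group
  set f' : G ⧸ C → S := fun q => ⟨f q, hrange q⟩ with hf'
  have hinj' : Function.Injective f' := by
    intro a b hab
    exact hinj (congrArg Subtype.val hab)
  have : Finite S := hfin
  have hfinq : Finite (G ⧸ C) := Finite.of_injective f' hinj'
  constructor
  · rw [Subgroup.index_eq_card]
    calc Nat.card (G ⧸ C) ≤ Nat.card S := Nat.card_le_card_of_injective f' hinj'
      _ = S.ncard := (Nat.card_coe_set_eq S)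
      _ ≤ m := hcard
  · rw [Subgroup.index_eq_card]
    exact Nat.card_pos

lemma normalCore_index_le (Hs : Subgroup G) [Hs.FiniteIndex] :
    Hs.normalCore.index ≤ Nat.factorial Hs.index := by
  rw [Subgroup.normalCore_eq_ker, Subgroup.index_ker]
  have hfinq : Finite (G ⧸ Hs) := Subgroup.finite_quotient_of_finiteIndex
  have h1 : Nat.card (MulAction.toPermHom G (G ⧸ Hs)).range
      ≤ Nat.card (Equiv.Perm (G ⧸ Hs)) :=
    Nat.card_le_card_of_injective Subtype.val Subtype.val_injective
  refine le_trans h1 ?_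
  have : Fintype (G ⧸ Hs) := Fintype.ofFinite _
  have : DecidableEq (G ⧸ Hs) := Classical.decEq _
  rw [Nat.card_eq_fintype_card, Fintype.card_perm, Subgroup.index_eq_card,
    Nat.card_eq_fintype_card]

end IndexBounds

section FinRange

lemma mem_finRange_drop {ℓ u : ℕ} {j : Fin ℓ} (h : j ∈ (List.finRange ℓ).drop u) :
    u ≤ (j : ℕ) := by
  rw [List.mem_iff_getElem] at h
  obtain ⟨t, ht, heq⟩ := h
  rw [List.getElem_drop, List.getElem_finRange] at heq
  have : (j : ℕ) = u + t := by rw [← heq]; simp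
  omega

lemma mem_finRange_take {ℓ u : ℕ} {j : Fin ℓ} (h : j ∈ (List.finRange ℓ).take u) :
    (j : ℕ) < u := by
  rw [List.mem_iff_getElem] at h
  obtain ⟨t, ht, heq⟩ := h
  have htu : t < u := by
    have := ht
    simp [List.length_take] at this
    omega
  rw [List.getElem_take, List.getElem_finRange] at heq
  have : (j : ℕ) = t := by rw [← heq]; simp
  omega

end FinRange

/-- Lemma 4.4. `Fin ℓ` index `j` corresponds to paper index `j+1`, so
`I∖{u,…,ℓ}` is `I.filter (· < u)` and the paper's `J ⊆ {u+1,…,ℓ}` means `u < j` for all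
`j ∈ J`. -/
theorem stmt13 (ℓ m b i : ℕ) (hℓ : 0 < ℓ) (hm : 0 < m) (hb : 0 < b) (hi : 0 < i) :
    ∃ C₁ : ℕ, ∀ n : ℕ, 0 < n → ∃ C₂ : ℕ,
      ∀ (G : Type) [Group G] (x : Fin ℓ → G),
        (maxComms ℓ G).Finite → (maxComms ℓ G).ncard = m →
        leftComm (List.ofFn x) ∈ maxComms ℓ G →
        orderOf (leftComm (List.ofFn x)) = n →
        DStable x (Subgroup.closure (maxComms ℓ G)) →
        ∀ (I : Finset (Fin ℓ)) (M : Subgroup G), M.Normal → M.index = i →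
          (∀ J : Finset (Fin ℓ), LexLike J I →
            (phiConj x J M).Finite ∧ (phiConj x J M).ncard < b) →
          (∀ u ∈ I, ∀ J : Finset (Fin ℓ), J.Nonempty → (∀ j ∈ J, u < j) →
            ∀ y : Fin ℓ → G, (∀ j, y j ∈ M) →
              phi x (I.filter (· < u) ∪ J) y = 1) →
          ∃ Mstar : Subgroup G, Mstar.Normal ∧ 0 < Mstar.index ∧ Mstar.index ≤ C₁ ∧
            (phiConj x I Mstar).Finite ∧ (phiConj x I Mstar).ncard ≤ C₂ := by
  classical
  refine ⟨Nat.factorial (i * m), fun n hn => ⟨(2 * m + 1) ^ ((2 * m + 1) * n), ?_⟩⟩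
  intro G _ x hfin hmcard hd horder hstable I M hMnorm hMidx hsmall hvanish
  classical
  set d := leftComm (List.ofFn x) with hddef
  have hords : ∀ c ∈ maxComms ℓ G, orderOf c = n := maxComms_orderOf hd horder hn
  have hpow : ∀ s ∈ maxComms ℓ G, s ^ n = 1 := fun s hs => by
    rw [← hords s hs]; exact pow_orderOf_eq_one s
  have hSconj : ∀ g : G, ∀ s ∈ maxComms ℓ G, g⁻¹ * s * g ∈ maxComms ℓ G :=
    fun g s hs => conj_mem_maxComms hs g
  set D := Subgroup.closure (maxComms ℓ G) with hDdef
  have hDnorm : D.Normal := closure_maxComms_normal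
  -- the symmetric alphabet
  set S' : Set G := maxComms ℓ G ∪ (maxComms ℓ G)⁻¹ with hS'def
  have hS'fin : S'.Finite := hfin.union hfin.inv
  have hS'conj : ∀ g : G, ∀ s ∈ S', g⁻¹ * s * g ∈ S' := by
    intro g s hs
    rcases hs with hs | hs
    · exact Or.inl (hSconj g s hs)
    · refine Or.inr ?_
      rw [Set.mem_inv] at hs ⊢
      have := hSconj g s⁻¹ hs
      simpa [mul_assoc] using this
  have hS'pow : ∀ s ∈ S', s ^ n = 1 := by
    intro s hs
    rcases hs with hs | hs
    · exact hpow s hs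
    · rw [Set.mem_inv] at hs
      have h1 := hpow s⁻¹ hs
      have h2 : (s ^ n)⁻¹ = 1 := by rw [← inv_pow, h1]
      simpa using h2
  have hS'inv : ∀ s ∈ S', s⁻¹ ∈ S' := by
    intro s hs
    rcases hs with hs | hs
    · exact Or.inr (by rwa [Set.mem_inv, inv_inv])
    · exact Or.inl (by rwa [Set.mem_inv] at hs)
  -- every element of D is a word over S'
  have hword : ∀ g ∈ D, ∃ l : List G, (∀ a ∈ l, a ∈ S') ∧ l.prod = g := by
    intro g hg
    induction hg using Subgroup.closure_induction with
    | mem s hs =>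
      refine ⟨[s], ?_, by simp⟩
      intro a ha
      rw [List.mem_singleton] at ha
      subst ha
      exact Or.inl hs
    | one => exact ⟨[], by simp, by simp⟩
    | mul a c _ _ iha ihc =>
      obtain ⟨la, hla, hpa⟩ := iha
      obtain ⟨lc, hlc, hpc⟩ := ihc
      refine ⟨la ++ lc, ?_, by rw [List.prod_append, hpa, hpc]⟩
      intro z hz
      rcases List.mem_append.mp hz with h | h
      · exact hla z h
      · exact hlc z h
    | inv a _ iha =>
      obtain ⟨la, hla, hpa⟩ := iha
      refine ⟨(la.map fun z => z⁻¹).reverse, ?_, ?_⟩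
      · intro c hc
        rw [List.mem_reverse, List.mem_map] at hc
        obtain ⟨z, hz, rfl⟩ := hc
        exact hS'inv z (hla z hz)
      · rw [← List.prod_inv_reverse, hpa]
  -- bounded word set W
  set T := hS'fin.toFinset with hTdef
  have hTcard : T.card ≤ 2 * m := by
    have h0 : T.card = S'.ncard := (Set.ncard_eq_toFinset_card S' hS'fin).symm
    have h1 : S'.ncard ≤ (maxComms ℓ G).ncard + ((maxComms ℓ G)⁻¹).ncard :=
      Set.ncard_union_le _ _
    have h2 : ((maxComms ℓ G)⁻¹).ncard ≤ (maxComms ℓ G).ncard := by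
      have himg : (maxComms ℓ G)⁻¹ = (fun a => a⁻¹) '' (maxComms ℓ G) := by
        ext z
        simp only [Set.mem_inv, Set.mem_image]
        constructor
        · intro h; exact ⟨z⁻¹, h, by simp⟩
        · rintro ⟨a, ha, rfl⟩; simpa using ha
      rw [himg]
      exact Set.ncard_image_le hfin
    rw [h0]
    rw [hmcard] at h1 h2
    omega
  set T'' := insert (1 : G) T with hT''def
  obtain ⟨W, hWfin, hWcard, hWmem⟩ := bounded_words T'' (Finset.mem_insert_self 1 T) (n * T.card)
  have hDW : (D : Set G) ⊆ W := by
    intro g hg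
    obtain ⟨l, hlm, hlp⟩ := hword g hg
    obtain ⟨l', h1', h2', h3'⟩ := reduce_word S' hS'fin hS'conj n hn hS'pow l hlm
    have hTm : ∀ a ∈ l', a ∈ T'' := by
      intro a ha
      exact Finset.mem_insert_of_mem (hS'fin.mem_toFinset.mpr (h1' a ha))
    have := hWmem l' hTm h2'
    rwa [h3', hlp] at this
  have hWbound : W.ncard ≤ (2 * m + 1) ^ ((2 * m + 1) * n) := by
    refine le_trans hWcard ?_
    have hT''card : T''.card ≤ 2 * m + 1 :=
      le_trans (Finset.card_insert_le _ _) (by omega)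
    have hKle : n * T.card ≤ (2 * m + 1) * n := by
      calc n * T.card ≤ n * (2 * m) := Nat.mul_le_mul_left n hTcard
        _ ≤ n * (2 * m + 1) := Nat.mul_le_mul_left n (by omega)
        _ = (2 * m + 1) * n := mul_comm _ _
    calc T''.card ^ (n * T.card) ≤ (2 * m + 1) ^ (n * T.card) :=
          Nat.pow_le_pow_left hT''card _
      _ ≤ (2 * m + 1) ^ ((2 * m + 1) * n) := Nat.pow_le_pow_right (by omega) hKle
  -- the subgroup Mstar
  have hCidx := centralizer_index_le hfin (le_of_eq hmcard) (fun g => hSconj g d hd)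
  set C := Subgroup.centralizer ({d} : Set G) with hCdef
  have hCfi : C.FiniteIndex := ⟨hCidx.2.ne'⟩
  have hMfi : M.FiniteIndex := ⟨by rw [hMidx]; omega⟩
  have hMCfi : (M ⊓ C).FiniteIndex := inferInstance
  set N₀ := (M ⊓ C).normalCore with hN₀def
  have hN₀norm : N₀.Normal := Subgroup.normalCore_normal _
  have hN₀fi : N₀.FiniteIndex := by
    rw [hN₀def]
    infer_instance
  have hN₀idx : N₀.index ≤ Nat.factorial (i * m) := by
    refine le_trans (normalCore_index_le (M ⊓ C)) (Nat.factorial_le ?_)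
    refine le_trans Subgroup.index_inf_le ?_
    rw [hMidx]
    exact Nat.mul_le_mul_left i hCidx.1
  have hN₀M : N₀ ≤ M := le_trans (Subgroup.normalCore_le _) inf_le_left
  have hN₀C : N₀ ≤ C := le_trans (Subgroup.normalCore_le _) inf_le_right
  -- THE KEY : all φ_I-values over N₀ lie in D
  have hkey : ∀ y : Fin ℓ → G, (∀ j ∈ I, y j ∈ N₀) → phi x I y ∈ D := by
    intro y hy
    by_cases hIe : I = ∅
    · subst hIe
      have hphi : phi x (∅ : Finset (Fin ℓ)) y = d := by
        unfold phi
        rw [hddef]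
        simp
      rw [hphi]
      exact Subgroup.subset_closure hd
    have hne : I.Nonempty := Finset.nonempty_iff_ne_empty.mpr hIe
    set u := I.min' hne with hudef
    have huI : u ∈ I := I.min'_mem hne
    have humin : ∀ j ∈ I, ¬ j < u := fun j hj => not_lt.mpr (I.min'_le j hj)
    -- base fact from d-stability
    have hbase : ∀ w : Fin ℓ → G, (∀ j, w j ∈ N₀) →
        leftComm (List.ofFn fun j => if (u : ℕ) ≤ (j : ℕ) then x j * w j else x j) ∈ D := by
      intro w hw
      have hvan : ∀ I'' : Finset (Fin ℓ), I''.Nonempty →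
          (∀ j ∈ I'', (u : ℕ) + 1 ≤ (j : ℕ)) →
          ∀ y'' : Fin ℓ → G, (∀ j ∈ I'', y'' j ∈ N₀) → phi x I'' y'' = 1 := by
        intro I'' hne'' hge'' y'' hy''
        have hflt : I.filter (· < u) = ∅ := Finset.filter_eq_empty_iff.mpr humin
        have hlt'' : ∀ j ∈ I'', u < j := by
          intro j hj
          have := hge'' j hj
          rw [Fin.lt_def]; omega
        have hv := hvanish u huI I'' hne'' hlt''
          (fun j => if j ∈ I'' then y'' j else 1)
          (fun j => by
            by_cases h : j ∈ I''
            · simp only [h, if_true]; exact hN₀M (hy'' j h)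
            · simp only [h, if_false]; exact one_mem M)
        rw [hflt, Finset.empty_union] at hv
        have hfeq : (fun j => if j ∈ I'' then y'' j else x j)
            = fun j => if j ∈ I'' then (if j ∈ I'' then y'' j else 1) else x j := by
          funext j; by_cases h : j ∈ I'' <;> simp [h]
        calc phi x I'' y''
            = phi x I'' (fun j => if j ∈ I'' then y'' j else 1) :=
              congrArg (fun f => leftComm (List.ofFn f)) hfeq
          _ = 1 := hv
      have hstab := hstable ((u : ℕ) + 1) (by omega) N₀ hN₀norm hN₀C hvan
        (Finset.univ.filter fun j => u < j)
        (fun j hj => by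
          rw [Finset.mem_filter] at hj
          have := Fin.lt_def.mp hj.2
          omega)
        w hw
      have hpat : (fun j : Fin ℓ =>
            if (j : ℕ) + 1 = (u : ℕ) + 1 ∨ j ∈ Finset.univ.filter (fun j => u < j)
            then x j * w j else x j)
          = fun j : Fin ℓ => if (u : ℕ) ≤ (j : ℕ) then x j * w j else x j := by
        funext j
        have hiff : ((j : ℕ) + 1 = (u : ℕ) + 1 ∨
            j ∈ Finset.univ.filter (fun j => u < j)) ↔ (u : ℕ) ≤ (j : ℕ) := by
          rw [Finset.mem_filter]
          simp only [Finset.mem_univ, true_and]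
          rw [Fin.lt_def]
          omega
        by_cases h : (u : ℕ) ≤ (j : ℕ)
        · rw [if_pos (hiff.mpr h), if_pos h]
        · rw [if_neg (fun hc => h (hiff.mp hc)), if_neg h]
      rw [← hpat]
      exact hstab
    -- pass to the quotient by D
    set π : G →* G ⧸ D := QuotientGroup.mk' D with hπdef
    have hπone : ∀ g : G, g ∈ D → π g = 1 := by
      intro g hg
      exact (QuotientGroup.eq_one_iff g).mpr hg
    set NN := N₀.map π with hNNdef
    have hNNnorm : NN.Normal := hN₀norm.map π (QuotientGroup.mk'_surjective D)
    set xb : Fin ℓ → G ⧸ D := fun j => π (x j) with hxbdef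
    have hlift : ∀ ν : Fin ℓ → G ⧸ D, (∀ j, ν j ∈ NN) →
        ∃ w : Fin ℓ → G, (∀ j, w j ∈ N₀) ∧ ∀ j, π (w j) = ν j := by
      intro ν hν
      choose w hw1 hw2 using fun j => Subgroup.mem_map.mp (hν j)
      exact ⟨w, hw1, hw2⟩
    set L : List (Fin ℓ) := List.finRange ℓ with hLdef
    have hval : ∀ (pat : Fin ℓ → G) (k : ℕ),
        π (leftComm (List.ofFn pat))
          = fc ((L.drop (k + 1)).map (fun j => π (pat j)))
              (leftComm ((L.take (k + 1)).map (fun j => π (pat j)))) := by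
      intro pat k
      rw [map_leftComm, List.ofFn_eq_map, List.map_map]
      rw [leftComm_split_s13 (L.map (π ∘ pat)) k]
      rw [← List.map_drop, ← List.map_take]
      rfl
    set paty : Fin ℓ → G := fun j => if j ∈ I then y j else x j with hpatydef
    have hphieq : phi x I y = leftComm (List.ofFn paty) := rfl
    suffices hsuff : π (phi x I y) = 1 by
      have := (QuotientGroup.eq_one_iff (phi x I y)).mp hsuff
      exact this
    by_cases hu0 : (u : ℕ) = 0
    · -- u = 0 : use hcore with the pure head
      set js := L.drop 1 with hjsdef
      have hndjs : js.Nodup := (List.drop_sublist _ _).nodup (List.nodup_finRange ℓ)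
      have htake1 : L.take 1 = [(⟨0, hℓ⟩ : Fin ℓ)] := by
        apply List.ext_getElem
        · rw [hLdef]; simp; omega
        · intro t ht₁ ht₂
          have ht0 : t = 0 := by
            simp only [List.length_singleton] at ht₂
            omega
          subst ht0
          rw [List.getElem_take, List.getElem_finRange]
          simp [Fin.ext_iff]
      have hueq : u = (⟨0, hℓ⟩ : Fin ℓ) := by
        apply Fin.ext
        simpa using hu0
      have htake1u : L.take 1 = [u] := by rw [hueq]; exact htake1
      -- base in fc-form for the head version
      have hbfc : ∀ ν₀ ∈ NN, ∀ ν : Fin ℓ → G ⧸ D, (∀ j, ν j ∈ NN) →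
          fc (js.map fun j => xb j * ν j) (xb u * ν₀) = 1 := by
        intro ν₀ hν₀ ν hν
        obtain ⟨w₀, hw₀1, hw₀2⟩ := Subgroup.mem_map.mp hν₀
        obtain ⟨w, hw1, hw2⟩ := hlift ν hν
        set w' := Function.update w u w₀ with hw'def
        have hw'1 : ∀ j, w' j ∈ N₀ := by
          intro j
          rcases eq_or_ne j u with rfl | hju
          · simpa [hw'def] using hw₀1
          · rw [hw'def, Function.update_of_ne hju]; exact hw1 j
        have hD1 := hbase w' hw'1
        have hval1 := hval (fun j => if (u : ℕ) ≤ (j : ℕ) then x j * w' j else x j) 0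
        rw [hπone _ hD1] at hval1
        -- take part
        have htakepart : ((L.take (0 + 1)).map
            (fun j : Fin ℓ => π (if (u : ℕ) ≤ (j : ℕ) then x j * w' j else x j))) = [xb u * ν₀] := by
          rw [zero_add, htake1u]
          simp only [List.map_singleton]
          congr 1
          rw [if_pos (le_refl _), map_mul]
          congr 1
          rw [hw'def, Function.update_self]
          exact hw₀2
        -- drop part
        have hdroppart : ((L.drop (0 + 1)).map
            (fun j : Fin ℓ => π (if (u : ℕ) ≤ (j : ℕ) then x j * w' j else x j)))
            = js.map fun j => xb j * ν j := by
          rw [zero_add, ← hjsdef]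
          refine List.map_congr_left fun j hj => ?_
          have hj1 : 1 ≤ (j : ℕ) := mem_finRange_drop hj
          have hju : j ≠ u := by
            intro h
            rw [h] at hj1
            omega
          rw [if_pos (by omega), map_mul, hw'def, Function.update_of_ne hju, hw2]
        rw [htakepart, hdroppart] at hval1
        rw [leftComm_singleton] at hval1
        exact hval1.symm
      -- choices
      have hchoice : ∀ j ∈ js, π (paty j) ∈ NN ∨ ∃ ν ∈ NN, π (paty j) = xb j * ν := by
        intro j hj
        by_cases h : j ∈ I
        · left
          rw [hpatydef]
          simp only [h, if_true]
          exact Subgroup.mem_map_of_mem π (hy j h)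
        · right
          refine ⟨1, one_mem _, ?_⟩
          rw [hpatydef]
          simp only [h, if_false, mul_one, hxbdef]
      have hheadmem : π (paty u) ∈ NN := by
        rw [hpatydef]
        simp only [huI, if_true]
        exact Subgroup.mem_map_of_mem π (hy u huI)
      have hfinal := hcore hNNnorm js hndjs (xb u) hbfc (π (paty u)) hheadmem
        (fun j => π (paty j)) hchoice
      -- assemble
      have hval2 := hval paty 0
      have htakepart2 : ((L.take (0 + 1)).map (fun j => π (paty j))) = [π (paty u)] := by
        rw [zero_add, htake1u]
        simp only [List.map_singleton]
      rw [htakepart2, leftComm_singleton, zero_add, ← hjsdef] at hval2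
      rw [hphieq, hval2]
      exact hfinal
    · -- u ≥ 1
      have hu1 : 1 ≤ (u : ℕ) := by omega
      obtain ⟨k, hk⟩ : ∃ k, (u : ℕ) = k + 1 := ⟨(u : ℕ) - 1, by omega⟩
      set js := L.drop (u : ℕ) with hjsdef
      have hndjs : js.Nodup := (List.drop_sublist _ _).nodup (List.nodup_finRange ℓ)
      set σb := leftComm ((L.take (u : ℕ)).map xb) with hσbdef
      have hpre : ∀ pat : Fin ℓ → G, (∀ j : Fin ℓ, (j : ℕ) < (u : ℕ) → pat j = x j) →
          ((L.take (u : ℕ)).map (fun j => π (pat j))) = (L.take (u : ℕ)).map xb := by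
        intro pat hp
        refine List.map_congr_left fun j hj => ?_
        rw [hp j (mem_finRange_take hj)]
      have hbfc : Dies NN xb js σb := by
        intro ν hν
        obtain ⟨w, hw1, hw2⟩ := hlift ν hν
        have hD1 := hbase w hw1
        have hval1 := hval (fun j => if (u : ℕ) ≤ (j : ℕ) then x j * w j else x j) k
        rw [hπone _ hD1] at hval1
        rw [← hk] at hval1
        have htakepart : ((L.take (u : ℕ)).map
            (fun j : Fin ℓ => π (if (u : ℕ) ≤ (j : ℕ) then x j * w j else x j)))
            = (L.take (u : ℕ)).map xb := by
          refine hpre _ ?_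
          intro j hj
          rw [if_neg (by omega)]
        have hdroppart : ((L.drop (u : ℕ)).map
            (fun j : Fin ℓ => π (if (u : ℕ) ≤ (j : ℕ) then x j * w j else x j)))
            = js.map fun j => xb j * ν j := by
          rw [← hjsdef]
          refine List.map_congr_left fun j hj => ?_
          have hju : (u : ℕ) ≤ (j : ℕ) := mem_finRange_drop hj
          rw [if_pos hju, map_mul, hw2]
        rw [htakepart, hdroppart] at hval1
        rw [← hσbdef] at hval1
        exact hval1.symm
      have hchoice : ∀ j ∈ js, π (paty j) ∈ NN ∨ ∃ ν ∈ NN, π (paty j) = xb j * ν := by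
        intro j hj
        by_cases h : j ∈ I
        · left
          rw [hpatydef]
          simp only [h, if_true]
          exact Subgroup.mem_map_of_mem π (hy j h)
        · right
          refine ⟨1, one_mem _, ?_⟩
          rw [hpatydef]
          simp only [h, if_false, mul_one, hxbdef]
      have hfinal := core hNNnorm js hndjs σb hbfc (fun j => π (paty j)) hchoice
      have hval2 := hval paty k
      rw [← hk] at hval2
      have htakepart2 : ((L.take (u : ℕ)).map (fun j => π (paty j)))
          = (L.take (u : ℕ)).map xb := by
        refine hpre _ ?_
        intro j hj
        rw [hpatydef]
        simp only []
        rw [if_neg ?_]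
        intro hjI
        exact humin j hjI (Fin.lt_def.mpr hj)
      rw [htakepart2, ← hσbdef, ← hjsdef] at hval2
      rw [hphieq, hval2]
      exact hfinal
  -- conclusion
  have hsub : phiConj x I N₀ ⊆ W := by
    rintro g ⟨y, h, hy, rfl⟩
    refine hDW ?_
    have hv := hkey y hy
    have := hDnorm.conj_mem _ hv h⁻¹
    simpa using this
  refine ⟨N₀, hN₀norm, ?_, hN₀idx, ?_, ?_⟩
  · exact Nat.pos_of_ne_zero hN₀fi.index_ne_zero
  · exact hWfin.subset hsub
  · exact le_trans (Set.ncard_le_ncard hsub hWfin) hWbound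

end ArXiv
end

section
/- Let G be a finite nilpotent group, ℓ ≥ 2, let 𝒟_ℓ be the set of commutators of length ℓ of maximal order in G and let D = ⟨𝒟_ℓ⟩. Let p be a prime and let P be the Sylow p-subgroup of G. Then every commutator of length ℓ in P whose order is maximal among the orders of all commutators of length ℓ of P belongs to D. -/
namespace ArXiv

variable {G : Type*} [Group G]

lemma comm_map {H : Type*} [Group H] (f : G →* H) (a b : G) :
    f (comm a b) = comm (f a) (f b) := by simp [comm]

lemma leftComm_map {H : Type*} [Group H] (f : G →* H) (l : List G) :
    f (leftComm l) = leftComm (l.map f) := by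
  cases l with
  | nil => simp [leftComm]
  | cons x xs =>
    show f (xs.foldl comm x) = (xs.map f).foldl comm (f x)
    induction xs generalizing x with
    | nil => rfl
    | cons y ys ih =>
      simp only [List.foldl_cons, List.map_cons]
      rw [ih, comm_map]

lemma leftComm_ofFn_map {H : Type*} [Group H] (f : G →* H) {n : ℕ} (x : Fin n → G) :
    f (leftComm (List.ofFn x)) = leftComm (List.ofFn (fun i => f (x i))) := by
  rw [leftComm_map, List.map_ofFn]; rfl

lemma IsCommOfLength.map {H : Type*} [Group H] (f : G →* H) {ℓ : ℕ} {g : G}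
    (h : IsCommOfLength ℓ g) : IsCommOfLength ℓ (f g) := by
  obtain ⟨x, hx⟩ := h
  exact ⟨fun i => f (x i), by rw [hx, leftComm_ofFn_map]⟩

lemma extOrder_eq [Finite G] (a : G) : extOrder a = (orderOf a : ℕ∞) := by
  simp [extOrder, isOfFinOrder_of_finite]

lemma extOrder_le_iff [Finite G] (a b : G) :
    extOrder a ≤ extOrder b ↔ orderOf a ≤ orderOf b := by
  rw [extOrder_eq, extOrder_eq, Nat.cast_le]

lemma leftComm_one {n : ℕ} : leftComm (List.ofFn (fun _ : Fin n => (1 : G))) = 1 := by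
  rw [List.ofFn_const]
  cases n with
  | zero => rfl
  | succ m =>
    show (List.replicate m (1:G)).foldl comm 1 = 1
    induction m with
    | zero => rfl
    | succ k ih =>
      show (List.replicate k (1:G)).foldl comm (comm 1 1) = 1
      simpa [comm] using ih

lemma one_isCommOfLength (ℓ : ℕ) : IsCommOfLength ℓ (1 : G) :=
  ⟨fun _ => 1, leftComm_one.symm⟩

lemma exists_maxComms [Finite G] (ℓ : ℕ) : ∃ d : G, d ∈ maxComms ℓ G := by
  classical
  have hfin : {c : G | IsCommOfLength ℓ c}.Finite := Set.toFinite _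
  obtain ⟨d, hd, hmax⟩ := Finset.exists_max_image hfin.toFinset orderOf
    ⟨1, by simp [one_isCommOfLength]⟩
  refine ⟨d, by simpa using hd, fun c hc => ?_⟩
  rw [extOrder_le_iff]
  exact hmax c (by simpa using hc)

lemma orderOf_pi {ι : Type*} [Fintype ι] {M : ι → Type*} [∀ i, Group (M i)]
    [∀ i, Finite (M i)] (f : ∀ i, M i) :
    orderOf f = Finset.univ.lcm fun i => orderOf (f i) := by
  apply Nat.dvd_antisymm
  · rw [orderOf_dvd_iff_pow_eq_one]
    funext i
    show (f i) ^ _ = 1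
    rw [← orderOf_dvd_iff_pow_eq_one]
    exact Finset.dvd_lcm (Finset.mem_univ i)
  · apply Finset.lcm_dvd
    intro i _
    apply orderOf_dvd_of_pow_eq_one
    have : f ^ orderOf f = 1 := pow_orderOf_eq_one f
    exact congrFun this i

lemma leftComm_apply {ι : Type*} {M : ι → Type*} [∀ i, Group (M i)] {n : ℕ}
    (x : Fin n → (∀ i, M i)) (i : ι) :
    leftComm (List.ofFn x) i = leftComm (List.ofFn fun j => x j i) :=
  leftComm_ofFn_map (Pi.evalMonoidHom M i) x

/-- in a finite nilpotent group `G`, every commutator of length `ℓ` of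
maximal order in the Sylow `p`-subgroup `P` belongs to `D = ⟨𝒟_ℓ⟩`. -/
theorem stmt17 (G : Type*) [Group G] [Finite G] [Group.IsNilpotent G]
    (ℓ : ℕ) (hℓ : 2 ≤ ℓ) (p : ℕ) (hp : p.Prime) (P : Sylow p G) :
    ∀ g ∈ maxComms ℓ ↥(P : Subgroup G),
      (g : G) ∈ Subgroup.closure (maxComms ℓ G) := by
  classical
  intro g hg
  by_cases hg1 : (g : G) = 1
  · rw [hg1]; exact one_mem _
  haveI hpF : Fact p.Prime := ⟨hp⟩
  have hnil : Group.IsNilpotent G := inferInstance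
  have hiff := (@isNilpotent_of_finite_tfae G _ _).out 0 3
  have hnorm : ∀ (q : ℕ) [Fact (Nat.Prime q)] (Q : Sylow q G), (Q : Subgroup G).Normal :=
    fun q hq Q => hiff.mp hnil q hq Q
  -- p divides the order of G
  have hgord : orderOf (g : G) ≠ 1 := by simpa [orderOf_eq_one_iff] using hg1
  have hpdvd : p ∣ Nat.card G := by
    obtain ⟨k, hk⟩ := IsPGroup.iff_orderOf.mp P.isPGroup' g
    have hk' : orderOf (g : G) = p ^ k := by rw [Subgroup.orderOf_coe] ; exact hk
    have hk0 : k ≠ 0 := by rintro rfl; simp [hk'] at hgord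
    exact dvd_trans (hk' ▸ dvd_pow_self p hk0) (orderOf_dvd_natCard _)
  have := Fintype.ofFinite G
  have hcard0 : Nat.card G ≠ 0 := Nat.card_pos.ne'
  set ps := (Nat.card G).primeFactors with hps
  have hpmem : p ∈ ps := Nat.mem_primeFactors.mpr ⟨hp, hpdvd, hcard0⟩
  haveI instF : ∀ q : ps, Fact (Nat.Prime (q : ℕ)) :=
    fun q => ⟨Nat.prime_of_mem_primeFactors q.2⟩
  let Sy : ∀ q : ps, Sylow (q : ℕ) G := fun _ => default
  have hcomm : Pairwise fun q r : ps => ∀ x y : G, x ∈ Sy q → y ∈ Sy r → Commute x y := by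
    rintro ⟨q, hq⟩ ⟨r, hr⟩ hne
    haveI := Fact.mk (Nat.prime_of_mem_primeFactors hq)
    haveI := Fact.mk (Nat.prime_of_mem_primeFactors hr)
    have hne' : q ≠ r := by simpa using hne
    apply Subgroup.commute_of_normal_of_disjoint _ _ (hnorm q _) (hnorm r _)
    exact IsPGroup.disjoint_of_ne q r hne' _ _ (Sy ⟨q, hq⟩).isPGroup' (Sy ⟨r, hr⟩).isPGroup'
  haveI : ∀ q : ps, Fintype ((Sy q : Subgroup G)) := fun q => Fintype.ofFinite _
  let π : (∀ q : ps, ((Sy q : Subgroup G))) →* G := Subgroup.noncommPiCoprod hcomm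
  have hbij : Function.Bijective π := by
    rw [Nat.bijective_iff_injective_and_card]
    constructor
    · apply Subgroup.injective_noncommPiCoprod_of_iSupIndep
      apply Subgroup.independent_of_coprime_order hcomm
      rintro ⟨q, hq⟩ ⟨r, hr⟩ hne
      haveI := Fact.mk (Nat.prime_of_mem_primeFactors hq)
      haveI := Fact.mk (Nat.prime_of_mem_primeFactors hr)
      have hne' : q ≠ r := by simpa using hne
      simp only [← Nat.card_eq_fintype_card]
      exact IsPGroup.coprime_card_of_ne q r hne' _ _ (Sy ⟨q, hq⟩).isPGroup' (Sy ⟨r, hr⟩).isPGroup'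
    · calc
        Nat.card (∀ q : ps, ((Sy q : Subgroup G))) =
            ∏ q : ps, Nat.card ((Sy q : Subgroup G)) := Nat.card_pi
        _ = ∏ q : ps, (q : ℕ) ^ (Nat.card G).factorization (q : ℕ) := by
            congr 1; funext q; exact Sylow.card_eq_multiplicity (Sy q)
        _ = ∏ q ∈ ps, q ^ (Nat.card G).factorization q :=
            Finset.prod_finset_coe (fun q => q ^ (Nat.card G).factorization q) _
        _ = (Nat.card G).factorization.prod (· ^ ·) := rfl
        _ = Nat.card G := Nat.factorization_prod_pow_eq_self hcard0
  let e : (∀ q : ps, ((Sy q : Subgroup G))) ≃* G := MulEquiv.ofBijective π hbij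
  have he : ∀ z, e z = π z := fun _ => rfl
  -- the index for p, and the identification Sy q0 = P
  let q0 : ps := ⟨p, hpmem⟩
  haveI := Sylow.unique_of_normal P (hnorm p P)
  have hSyP : ((Sy q0 : Subgroup G)) = (P : Subgroup G) := by
    have : Sy q0 = P := Subsingleton.elim _ _
    rw [this]
  -- a maximal commutator d of G and its coordinates
  obtain ⟨d, hd⟩ := exists_maxComms (G := G) ℓ
  obtain ⟨x, hx⟩ := hd.1
  let X : Fin ℓ → ∀ q : ps, ((Sy q : Subgroup G)) := fun i => e.symm (x i)
  have hdX : e.symm d = leftComm (List.ofFn X) := by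
    rw [hx]; exact leftComm_ofFn_map e.symm.toMonoidHom x
  -- the commutator h, combining g at p with d elsewhere
  obtain ⟨u, hu⟩ := hg.1
  have hucoe : (g : G) = leftComm (List.ofFn fun i => ((u i : G))) := by
    rw [hu]; exact leftComm_ofFn_map (P : Subgroup G).subtype u
  let U : Fin ℓ → ((Sy q0 : Subgroup G)) := fun i => ⟨(u i : G), by rw [hSyP]; exact (u i).2⟩
  let Z : Fin ℓ → ∀ q : ps, ((Sy q : Subgroup G)) := fun i => Function.update (X i) q0 (U i)
  let h : ∀ q : ps, ((Sy q : Subgroup G)) := leftComm (List.ofFn Z)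
  have hcoord : ∀ q : ps, q ≠ q0 → h q = e.symm d q := by
    intro q hq
    show leftComm (List.ofFn Z) q = e.symm d q
    rw [hdX, leftComm_apply, leftComm_apply]
    congr 1
    exact congrArg List.ofFn (funext fun i => Function.update_of_ne hq _ _)
  have hq0coe : ((h q0 : G)) = (g : G) := by
    have h1 : h q0 = leftComm (List.ofFn U) := by
      show leftComm (List.ofFn Z) q0 = _
      rw [leftComm_apply]
      congr 1
      exact congrArg List.ofFn (funext fun i => Function.update_self _ _ _)
    rw [h1, hucoe]
    exact leftComm_ofFn_map ((Sy q0 : Subgroup G)).subtype U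
  -- orders
  have horadq : ∀ q : ps, ∃ k, orderOf (e.symm d q) = (q : ℕ) ^ k :=
    fun q => IsPGroup.iff_orderOf.mp (Sy q).isPGroup' _
  have horah : ∀ q : ps, ∃ k, orderOf (h q) = (q : ℕ) ^ k :=
    fun q => IsPGroup.iff_orderOf.mp (Sy q).isPGroup' _
  -- the coordinate of d at p is a commutator of P, so its order divides that of g
  have hdq0_dvd : orderOf (e.symm d q0) ∣ orderOf (h q0) := by
    have hmem : ((e.symm d q0 : G)) ∈ (P : Subgroup G) := by rw [← hSyP]; exact (e.symm d q0).2
    let c : ((P : Subgroup G)) := ⟨(e.symm d q0 : G), hmem⟩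
    have h2 : e.symm d q0 = leftComm (List.ofFn fun i => X i q0) := by
      rw [hdX, leftComm_apply]
    have hcc : IsCommOfLength ℓ c := by
      refine ⟨fun i => ⟨(X i q0 : G), by rw [← hSyP]; exact (X i q0).2⟩, Subtype.ext ?_⟩
      have e1 : (c : G) = leftComm (List.ofFn fun i => ((X i q0 : G))) := by
        show ((e.symm d q0 : G)) = _
        rw [h2]
        exact leftComm_ofFn_map ((Sy q0 : Subgroup G)).subtype _
      have e2 : ((leftComm (List.ofFn fun i =>
            (⟨(X i q0 : G), by rw [← hSyP]; exact (X i q0).2⟩ : ((P : Subgroup G)))) :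
            ((P : Subgroup G))) : G) =
          leftComm (List.ofFn fun i => ((X i q0 : G))) :=
        leftComm_ofFn_map (P : Subgroup G).subtype _
      rw [e1, e2]
    have hle : orderOf c ≤ orderOf g := (extOrder_le_iff _ _).mp (hg.2 c hcc)
    have hoc : orderOf c = orderOf (e.symm d q0) := by
      rw [Subgroup.orderOf_mk, ← Subgroup.orderOf_coe (e.symm d q0)]
    have hog : orderOf g = orderOf (h q0) := by
      rw [← Subgroup.orderOf_coe g, ← hq0coe, Subgroup.orderOf_coe]
    rw [hoc, hog] at hle
    obtain ⟨a, ha⟩ := horadq q0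
    obtain ⟨b, hb⟩ := horah q0
    rw [ha, hb] at hle ⊢
    exact pow_dvd_pow p ((Nat.pow_le_pow_iff_right hp.one_lt).mp hle)
  -- h has maximal order
  have hdvd : orderOf (e.symm d) ∣ orderOf h := by
    rw [orderOf_pi, orderOf_pi]
    apply Finset.lcm_dvd
    intro q _
    by_cases hq : q = q0
    · rw [hq]
      exact dvd_trans hdq0_dvd (Finset.dvd_lcm (Finset.mem_univ q0))
    · rw [← hcoord q hq]
      exact Finset.dvd_lcm (Finset.mem_univ q)
  have Hh : IsCommOfLength ℓ (e h) := IsCommOfLength.map e.toMonoidHom ⟨Z, rfl⟩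
  have hoeh : orderOf (e h) = orderOf h := orderOf_injective e.toMonoidHom e.injective h
  have hod : orderOf (e.symm d) = orderOf d := orderOf_injective e.symm.toMonoidHom e.symm.injective d
  have hmax : orderOf (e h) = orderOf d := by
    apply Nat.le_antisymm ((extOrder_le_iff _ _).mp (hd.2 (e h) Hh))
    rw [hoeh, ← hod]
    exact Nat.le_of_dvd (orderOf_pos h) hdvd
  have hmem : e h ∈ maxComms ℓ G :=
    ⟨Hh, fun c hc => (hd.2 c hc).trans (le_of_eq (by rw [extOrder_eq, extOrder_eq, hmax]))⟩
  -- extract g as a power of e h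
  set m : ℕ := (Finset.univ.erase q0).lcm fun q : ps => orderOf (h q) with hm
  have co : Nat.Coprime (orderOf (h q0)) m := by
    obtain ⟨b, hb⟩ := horah q0
    rw [hb]
    apply Nat.Coprime.pow_left
    have hcp : Nat.Coprime p (∏ q ∈ Finset.univ.erase q0, orderOf (h q)) := by
      apply Nat.Coprime.prod_right
      intro q hq
      obtain ⟨kq, hkq⟩ := horah q
      rw [hkq]
      apply Nat.Coprime.pow_right
      refine (Nat.coprime_primes hp (instF q).out).mpr ?_
      intro hpq
      exact (Finset.mem_erase.mp hq).1 (Subtype.ext hpq.symm)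
    exact Nat.Coprime.coprime_dvd_right
      (Finset.lcm_dvd fun q hq => Finset.dvd_prod_of_mem _ hq) hcp
  obtain ⟨k, hk1, hk2⟩ := Nat.chineseRemainder co 1 0
  have hhk : h ^ k = Pi.mulSingle q0 (h q0) := by
    funext q
    by_cases hq : q = q0
    · show (h q) ^ k = _
      rw [hq, Pi.mulSingle_eq_same]
      calc (h q0) ^ k = (h q0) ^ 1 := pow_eq_pow_iff_modEq.mpr hk1
        _ = h q0 := pow_one _
    · show (h q) ^ k = _
      rw [Pi.mulSingle_eq_of_ne hq]
      rw [← orderOf_dvd_iff_pow_eq_one]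
      have h3 : orderOf (h q) ∣ m := by
        rw [hm]
        exact Finset.dvd_lcm (Finset.mem_erase.mpr ⟨hq, Finset.mem_univ q⟩)
      exact dvd_trans h3 (Nat.modEq_zero_iff_dvd.mp hk2)
  have hfinal : (g : G) = (e h) ^ k := by
    rw [← map_pow, hhk, he, Subgroup.noncommPiCoprod_mulSingle]
    exact hq0coe.symm
  rw [hfinal]
  exact pow_mem (Subgroup.subset_closure hmem) k

end ArXiv
end
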